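/- arXiv:funct-an/9612007 — 11 statements merged into one kernel-verified Lean document; each statement's English description precedes it below -/
import Mathlib

section
/- Let T be a regular bounded linear operator on a complex Banach space X and let S ∈ B(X) be a generalized inverse of T. Then for every i ≥ 1 and every j with 0 ≤ j ≤ i one has T^i ∘ S^i ∘ T^j = T^i ∘ S^(i−j), and for every j ≥ i one has T^i ∘ S^i ∘ T^j = T^j. -/
/-!
Regularity says every vector killed by a power of `T` lies in the range of `T`, where `T S`
acts as the identity. Hence `S` maps `ker T^n` into `ker T^(n+1)`, so `S^k` maps `ker T` into
`ker T^(k+1)`. Since `S T x - x ∈ ker T`, this gives `T^i S^(k+1) T = T^i S^k` for `k < i`,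
and the identities follow by peeling off one factor `T` at a time.
-/

namespace ContinuousLinearMap

variable {R M : Type*} [Semiring R] [TopologicalSpace M] [AddCommGroup M] [Module R M]
  {T S : M →L[R] M}

theorem apply_apply_eq_self_of_mem_range (hTST : T * S * T = T) {x : M}
    (hx : x ∈ LinearMap.range (T : M →ₗ[R] M)) : T (S x) = x := by
  obtain ⟨y, rfl⟩ := hx
  exact congr($hTST y)

variable (hTST : T * S * T = T)
  (hreg : ∀ n : ℕ, LinearMap.ker ((T ^ n : M →L[R] M) : M →ₗ[R] M) ≤ LinearMap.range (T : M →ₗ[R] M))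
include hTST hreg

theorem pow_add_apply_pow_apply_eq_zero {n : ℕ} {x : M} (hx : (T ^ n) x = 0) (m : ℕ) :
    (T ^ (n + m)) ((S ^ m) x) = 0 := by
  induction m generalizing n x with
  | zero => simpa using hx
  | succ m ih =>
    have hSx : (T ^ (n + 1)) (S x) = 0 := by
      rw [pow_succ, mul_apply_eq_comp, apply_apply_eq_self_of_mem_range hTST (hreg n hx), hx]
    rw [← add_assoc, add_right_comm, pow_succ S, mul_apply_eq_comp]
    exact ih hSx

theorem pow_mul_pow_succ_mul_self {i k : ℕ} (hki : k < i) :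
    T ^ i * S ^ (k + 1) * T = T ^ i * S ^ k := by
  ext x
  set w := S (T x) - x
  have hw : (T ^ 1) w = 0 := by
    simp only [w, pow_one, map_sub, sub_eq_zero]
    exact congr($hTST x)
  have hSkw : (T ^ i) ((S ^ k) w) = 0 := by
    rw [← Nat.sub_add_cancel (show 1 + k ≤ i by omega), pow_add, mul_apply_eq_comp,
      pow_add_apply_pow_apply_eq_zero hTST hreg hw, map_zero]
  have hSTx : S (T x) = x + w := by simp [w]
  simp only [mul_apply_eq_comp, pow_succ, hSTx, map_add, hSkw, add_zero]

theorem pow_mul_pow_mul_pow_of_le {i j : ℕ} (hji : j ≤ i) :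
    T ^ i * S ^ i * T ^ j = T ^ i * S ^ (i - j) := by
  induction j with
  | zero => simp
  | succ j ih =>
    have hij : i - j = i - (j + 1) + 1 := by omega
    rw [pow_succ, ← mul_assoc, ih (by omega), hij,
      pow_mul_pow_succ_mul_self hTST hreg (by omega)]

end ContinuousLinearMap

theorem stmt0_general {X : Type*} [NormedAddCommGroup X] [NormedSpace ℂ X]
    (T S : X →L[ℂ] X)
    (hTST : T * S * T = T)
    (hreg : ∀ n : ℕ, LinearMap.ker ((T ^ n : X →L[ℂ] X) : X →ₗ[ℂ] X) ≤ LinearMap.range (T : X →ₗ[ℂ] X)) :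
    ∀ i : ℕ, 1 ≤ i → ∀ j : ℕ,
      (j ≤ i → T ^ i * S ^ i * T ^ j = T ^ i * S ^ (i - j)) ∧
      (i ≤ j → T ^ i * S ^ i * T ^ j = T ^ j) := by
  intro i _ j
  refine ⟨ContinuousLinearMap.pow_mul_pow_mul_pow_of_le hTST hreg, fun hij => ?_⟩
  rw [← Nat.add_sub_cancel' hij, pow_add, ← mul_assoc,
    ContinuousLinearMap.pow_mul_pow_mul_pow_of_le hTST hreg le_rfl, Nat.sub_self, pow_zero, mul_one]

/-- Let `T` be a regular bounded linear operator on a complex Banach space `X`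
and let `S ∈ B(X)` be a generalized inverse of `T`.  Then for every `i ≥ 1` and every `j` with
`0 ≤ j ≤ i` one has `T^i ∘ S^i ∘ T^j = T^i ∘ S^(i-j)`, and for every `j ≥ i` one has
`T^i ∘ S^i ∘ T^j = T^j`. -/
theorem stmt0 {X : Type*} [NormedAddCommGroup X] [NormedSpace ℂ X] [CompleteSpace X]
    (T S : X →L[ℂ] X)
    (hTST : T * S * T = T) (hSTS : S * T * S = S)
    (hreg : ∀ n : ℕ, LinearMap.ker ((T ^ n : X →L[ℂ] X) : X →ₗ[ℂ] X) ≤ LinearMap.range (T : X →ₗ[ℂ] X)) :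
    ∀ i : ℕ, 1 ≤ i → ∀ j : ℕ,
      (j ≤ i → T ^ i * S ^ i * T ^ j = T ^ i * S ^ (i - j)) ∧
      (i ≤ j → T ^ i * S ^ i * T ^ j = T ^ j) :=
  stmt0_general T S hTST hreg
end

section
/- Let T be a regular bounded linear operator on a complex Banach space X and let S ∈ B(X) be a generalized inverse of T. Then for every i ≥ 1 and every j with 0 ≤ j ≤ i one has T^j ∘ S^i ∘ T^i = S^(i−j) ∘ T^i, and for every j ≥ i one has T^j ∘ S^i ∘ T^i = T^j. -/
/-!
Since `T * S * T = T`, the idempotent `T * S` fixes `range T` pointwise. Put `z = S^n T^(n+1) x`.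
If `T^n S^n T^n = T^n`, then `T^n z = T^n (T x)`, so `z - T x ∈ ker T^n ⊆ range T` by regularity
and hence `z ∈ range T`, i.e. `T S^(n+1) T^(n+1) = T S z = z = S^n T^(n+1)`. Multiplying this on
the left by `T^n` gives back `T^(n+1) S^(n+1) T^(n+1) = T^(n+1)`, so both identities hold for all
`n` by induction; the theorem follows by peeling off the factors `T` one at a time.
-/

open LinearMap

namespace Module.End

variable {R M : Type*} [Ring R] [AddCommGroup M] [Module R M] {T S : Module.End R M}

theorem mul_apply_eq_self_of_mem_range (hTST : T * S * T = T) {z : M} (hz : z ∈ range T) :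
    (T * S) z = z := by
  obtain ⟨y, rfl⟩ := hz
  rw [← mul_apply, hTST]

theorem mem_range_of_pow_apply_eq {n : ℕ} (hker : ker (T ^ n) ≤ range T) {z w : M}
    (h : (T ^ n) z = (T ^ n) w) (hw : w ∈ range T) : z ∈ range T := by
  have hzw : z - w ∈ ker (T ^ n) := by rw [mem_ker, map_sub, h, sub_self]
  simpa using add_mem (hker hzw) hw

theorem mul_pow_succ_mul_pow_succ (hTST : T * S * T = T) {n : ℕ} (hker : ker (T ^ n) ≤ range T)
    (hn : T ^ n * S ^ n * T ^ n = T ^ n) :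
    T * S ^ (n + 1) * T ^ (n + 1) = S ^ n * T ^ (n + 1) := by
  ext x
  set z := (S ^ n * T ^ (n + 1)) x
  have hTz : (T ^ n) z = (T ^ n) (T x) := by
    calc (T ^ n) z = (T ^ n * S ^ n * T ^ n) (T x) := by simp only [z, pow_succ, mul_apply]
      _ = (T ^ n) (T x) := by rw [hn]
  have hz : z ∈ range T := mem_range_of_pow_apply_eq hker hTz (mem_range_self T x)
  calc (T * S ^ (n + 1) * T ^ (n + 1)) x = (T * S) z := by
        simp only [z, pow_succ', mul_apply]
    _ = z := mul_apply_eq_self_of_mem_range hTST hz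

theorem pow_mul_pow_mul_pow_self (hTST : T * S * T = T)
    (hreg : ∀ n : ℕ, ker (T ^ n) ≤ range T) (n : ℕ) : T ^ n * S ^ n * T ^ n = T ^ n := by
  induction n with
  | zero => simp
  | succ n ih =>
    calc T ^ (n + 1) * S ^ (n + 1) * T ^ (n + 1)
        = T ^ n * (T * S ^ (n + 1) * T ^ (n + 1)) := by
          nth_rw 1 [pow_succ]; simp only [mul_assoc]
      _ = (T ^ n * S ^ n * T ^ n) * T := by
        rw [mul_pow_succ_mul_pow_succ hTST (hreg n) ih, pow_succ T n]; simp only [mul_assoc]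
      _ = T ^ (n + 1) := by rw [ih, pow_succ]

theorem pow_mul_pow_add_mul_pow_add (hTST : T * S * T = T)
    (hreg : ∀ n : ℕ, ker (T ^ n) ≤ range T) (j k : ℕ) :
    T ^ j * S ^ (j + k) * T ^ (j + k) = S ^ k * T ^ (j + k) := by
  induction j with
  | zero => simp
  | succ j ih =>
    have hstep :=
      mul_pow_succ_mul_pow_succ hTST (hreg (j + k)) (pow_mul_pow_mul_pow_self hTST hreg (j + k))
    calc T ^ (j + 1) * S ^ (j + 1 + k) * T ^ (j + 1 + k)
        = T ^ j * (T * S ^ (j + k + 1) * T ^ (j + k + 1)) := by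
          rw [Nat.add_right_comm, pow_succ T j]; simp only [mul_assoc]
      _ = (T ^ j * S ^ (j + k) * T ^ (j + k)) * T := by
          rw [hstep, pow_succ T (j + k)]; simp only [mul_assoc]
      _ = S ^ k * T ^ (j + 1 + k) := by
          rw [ih, Nat.add_right_comm, pow_succ T (j + k), mul_assoc]

theorem pow_add_mul_pow_mul_pow (hTST : T * S * T = T) (hreg : ∀ n : ℕ, ker (T ^ n) ≤ range T)
    (i k : ℕ) : T ^ (k + i) * S ^ i * T ^ i = T ^ (k + i) := by
  rw [pow_add, mul_assoc, mul_assoc, ← mul_assoc (T ^ i), pow_mul_pow_mul_pow_self hTST hreg]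

end Module.End

theorem stmt1_general {X : Type*} [NormedAddCommGroup X] [NormedSpace ℂ X]
    (T S : X →L[ℂ] X)
    (hTST : T * S * T = T)
    (hreg : ∀ n : ℕ, LinearMap.ker ((T ^ n : X →L[ℂ] X) : X →ₗ[ℂ] X) ≤ LinearMap.range (T : X →ₗ[ℂ] X)) :
    ∀ i : ℕ, 1 ≤ i → ∀ j : ℕ,
      (j ≤ i → T ^ j * S ^ i * T ^ i = S ^ (i - j) * T ^ i) ∧
      (i ≤ j → T ^ j * S ^ i * T ^ i = T ^ j) := by
  have hTST' : (T : X →ₗ[ℂ] X) * S * T = T := by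
    exact_mod_cast congrArg ContinuousLinearMap.toLinearMap hTST
  have hreg' : ∀ n : ℕ, ker ((T : X →ₗ[ℂ] X) ^ n) ≤ range (T : X →ₗ[ℂ] X) := by
    simpa only [ContinuousLinearMap.toLinearMap_pow] using hreg
  intro i _ j
  refine ⟨fun hji => ?_, fun hij => ?_⟩ <;>
    apply ContinuousLinearMap.coe_injective <;> push_cast
  · obtain ⟨k, rfl⟩ := Nat.exists_eq_add_of_le hji
    rw [Nat.add_sub_cancel_left]
    exact Module.End.pow_mul_pow_add_mul_pow_add hTST' hreg' j k
  · obtain ⟨k, rfl⟩ := Nat.exists_eq_add_of_le' hij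
    exact Module.End.pow_add_mul_pow_mul_pow hTST' hreg' i k

/-- Let `T` be a regular bounded linear operator on a complex Banach space `X`
and let `S ∈ B(X)` be a generalized inverse of `T`.  Then for every `i ≥ 1` and every `j` with
`0 ≤ j ≤ i` one has `T^j ∘ S^i ∘ T^i = S^(i-j) ∘ T^i`, and for every `j ≥ i` one has
`T^j ∘ S^i ∘ T^i = T^j`. -/
theorem stmt1 {X : Type*} [NormedAddCommGroup X] [NormedSpace ℂ X] [CompleteSpace X]
    (T S : X →L[ℂ] X)
    (hTST : T * S * T = T) (hSTS : S * T * S = S)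
    (hreg : ∀ n : ℕ, LinearMap.ker ((T ^ n : X →L[ℂ] X) : X →ₗ[ℂ] X) ≤ LinearMap.range (T : X →ₗ[ℂ] X)) :
    ∀ i : ℕ, 1 ≤ i → ∀ j : ℕ,
      (j ≤ i → T ^ j * S ^ i * T ^ i = S ^ (i - j) * T ^ i) ∧
      (i ≤ j → T ^ j * S ^ i * T ^ i = T ^ j) :=
  stmt1_general T S hTST hreg
end

section
/- Let T be a regular bounded linear operator on a complex Banach space X and let S ∈ B(X) be a generalized inverse of T. Then T^n ∘ S^n ∘ T^n = T^n for all n ≥ 1. -/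
open LinearMap

namespace Module.End

section Semiring

variable {R M : Type*} [Semiring R] [AddCommMonoid M] [Module R M] {T S : Module.End R M}

/-- If `m = T u`, then `T ^ (j + 1) (S m) = T ^ j (T S T u) = T ^ j m`. -/
theorem ker_pow_le_comap_ker_pow_succ (hTST : T * S * T = T) {j : ℕ}
    (hj : ker (T ^ j) ≤ range T) : ker (T ^ j) ≤ (ker (T ^ (j + 1))).comap S := by
  intro m hm
  obtain ⟨u, rfl⟩ := hj hm
  rw [Submodule.mem_comap, mem_ker, pow_succ, mul_apply, ← mul_apply T S, ← mul_apply (T * S),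
    hTST]
  exact hm

theorem ker_pow_le_comap_ker_pow_add (hTST : T * S * T = T) (hreg : ∀ n, ker (T ^ n) ≤ range T)
    (i j : ℕ) : ker (T ^ j) ≤ (ker (T ^ (j + i))).comap (S ^ i) := by
  induction i generalizing j with
  | zero => intro m hm; simpa using hm
  | succ i ih =>
    intro m hm
    have := ih (j + 1) (ker_pow_le_comap_ker_pow_succ hTST (hreg j) hm)
    rwa [Submodule.mem_comap, ← mul_apply, ← pow_succ, add_right_comm, add_assoc] at this

end Semiring

section Ring

variable {R M : Type*} [Ring R] [AddCommGroup M] [Module R M] {T S : Module.End R M}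

theorem pow_succ_mul_pow_mul_sub_one (hTST : T * S * T = T)
    (hreg : ∀ n, ker (T ^ n) ≤ range T) (n : ℕ) : T ^ (n + 1) * S ^ n * (S * T - 1) = 0 := by
  have range_le_ker : range (S * T - 1) ≤ ker (T ^ 1) := by
    rintro _ ⟨x, rfl⟩
    rw [mem_ker, pow_one, ← mul_apply, mul_sub, ← mul_assoc, hTST, mul_one, sub_self,
      LinearMap.zero_apply]
  ext x
  have := ker_pow_le_comap_ker_pow_add hTST hreg n 1 (range_le_ker ⟨x, rfl⟩)
  rw [Submodule.mem_comap, mem_ker, add_comm] at this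
  simpa only [mul_apply, LinearMap.zero_apply] using this

/-- Writing `S * T = 1 + (S * T - 1)` splits `T ^ (n + 1) * S ^ (n + 1) * T ^ (n + 1)` into
`T * (T ^ n * S ^ n * T ^ n)` and a term killed by `pow_succ_mul_pow_mul_sub_one`. -/
theorem pow_mul_pow_mul_pow_eq_pow (hTST : T * S * T = T)
    (hreg : ∀ n, ker (T ^ n) ≤ range T) (n : ℕ) : T ^ n * S ^ n * T ^ n = T ^ n := by
  induction n with
  | zero => simp
  | succ n ih =>
    calc T ^ (n + 1) * S ^ (n + 1) * T ^ (n + 1)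
        = T * (T ^ n * S ^ n * T ^ n) + T ^ (n + 1) * S ^ n * (S * T - 1) * T ^ n := by
          rw [pow_succ S, pow_succ' T]
          simp only [mul_sub, sub_mul, mul_one, mul_assoc]
          abel
      _ = T ^ (n + 1) := by
          rw [ih, pow_succ_mul_pow_mul_sub_one hTST hreg, zero_mul, add_zero, pow_succ']

end Ring

end Module.End

theorem stmt2_general {X : Type*} [NormedAddCommGroup X] [NormedSpace ℂ X]
    (T S : X →L[ℂ] X)
    (hTST : T * S * T = T)
    (hreg : ∀ n : ℕ, LinearMap.ker ((T ^ n : X →L[ℂ] X) : X →ₗ[ℂ] X) ≤ LinearMap.range (T : X →ₗ[ℂ] X)) :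
    ∀ n : ℕ, 1 ≤ n → T ^ n * S ^ n * T ^ n = T ^ n := by
  intro n _
  apply ContinuousLinearMap.coe_injective
  have hTST' := congrArg ((↑) : (X →L[ℂ] X) → X →ₗ[ℂ] X) hTST
  push_cast at hTST' hreg ⊢
  exact Module.End.pow_mul_pow_mul_pow_eq_pow hTST' hreg n

/-- Let `T` be a regular bounded linear operator on a complex Banach space `X`
and let `S ∈ B(X)` be a generalized inverse of `T`.  Then `T^n ∘ S^n ∘ T^n = T^n`
for all `n ≥ 1`. -/
theorem stmt2 {X : Type*} [NormedAddCommGroup X] [NormedSpace ℂ X] [CompleteSpace X]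
    (T S : X →L[ℂ] X)
    (hTST : T * S * T = T) (hSTS : S * T * S = S)
    (hreg : ∀ n : ℕ, LinearMap.ker ((T ^ n : X →L[ℂ] X) : X →ₗ[ℂ] X) ≤ LinearMap.range (T : X →ₗ[ℂ] X)) :
    ∀ n : ℕ, 1 ≤ n → T ^ n * S ^ n * T ^ n = T ^ n :=
  stmt2_general T S hTST hreg
end

section
/- Let U ⊆ ℂ be an open connected set containing 0, let T ∈ B(X), and let R(λ) = Σ_{n=0}^∞ λ^n T_n (with T_n ∈ B(X), the series converging on U) be such that R(λ) is a generalized inverse of T − λI for every λ ∈ U. Set P(λ) = (T − λI)∘R(λ) and Q(λ) = R(λ)∘(T − λI). If T_n = T_0^(n+1) for all n ≥ 1, then for every λ ∈ U one has ker(P(λ)) = ker(T∘T_0) and range(Q(λ)) = range(T_0∘T). -/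
/-!
At `λ = 0` the relation `R(0) T R(0) = R(0)` with `R(0) = T₀` gives `T₀ T T₀ = T₀`, so
`ker (T T₀) = ker T₀` and `range (T₀ T) = range T₀`; likewise
`R(λ) (T - λ) R(λ) = R(λ)` gives `ker P(λ) = ker R(λ)` and `range Q(λ) = range R(λ)`.
Since the coefficients are geometric, `R(λ) = T₀ + λ T₀ R(λ) = T₀ + λ R(λ) T₀`, which forces
`ker R(λ) = ker T₀` and `range R(λ) = range T₀`.
-/

section GeneralizedInverse

variable {R M : Type*} [Semiring R] [AddCommMonoid M] [Module R M] {r s : Module.End R M}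

theorem LinearMap.ker_mul_eq_of_mul_mul_eq (h : r * s * r = r) :
    LinearMap.ker (s * r) = LinearMap.ker r := by
  refine le_antisymm (fun x hx => ?_) (LinearMap.ker_le_ker_comp r s)
  rw [LinearMap.mem_ker] at hx ⊢
  rw [← h, Module.End.mul_apply, Module.End.mul_apply, ← Module.End.mul_apply s, hx, map_zero]

theorem LinearMap.range_mul_eq_of_mul_mul_eq (h : r * s * r = r) :
    LinearMap.range (r * s) = LinearMap.range r := by
  refine le_antisymm (LinearMap.range_comp_le_range s r) ?_
  rintro _ ⟨x, rfl⟩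
  exact ⟨r x, by rw [← Module.End.mul_apply, h]⟩

end GeneralizedInverse

section GeometricSeries

variable {𝕜 𝔸 : Type*} [CommSemiring 𝕜] [Ring 𝔸] [Algebra 𝕜 𝔸] [TopologicalSpace 𝔸]
  [IsTopologicalRing 𝔸] [ContinuousConstSMul 𝕜 𝔸] [T2Space 𝔸] {a s : 𝔸} {c : 𝕜}

theorem HasSum.eq_add_smul_mul_left (h : HasSum (fun n : ℕ => c ^ n • a ^ (n + 1)) s) :
    s = a + c • (a * s) := by
  have hshift : HasSum (fun n : ℕ => c ^ (n + 1) • a ^ (n + 1 + 1)) (c • (a * s)) := by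
    refine ((h.mul_left a).const_smul c).congr_fun fun n => ?_
    rw [mul_smul_comm, smul_smul, ← pow_succ', ← pow_succ']
  simpa [add_comm] using h.unique ((hasSum_nat_add_iff 1).mp hshift)

theorem HasSum.eq_add_smul_mul_right (h : HasSum (fun n : ℕ => c ^ n • a ^ (n + 1)) s) :
    s = a + c • (s * a) := by
  have hshift : HasSum (fun n : ℕ => c ^ (n + 1) • a ^ (n + 1 + 1)) (c • (s * a)) := by
    refine ((h.mul_right a).const_smul c).congr_fun fun n => ?_
    rw [smul_mul_assoc, smul_smul, ← pow_succ', ← pow_succ]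
  simpa [add_comm] using h.unique ((hasSum_nat_add_iff 1).mp hshift)

end GeometricSeries

section GeometricIdentity

variable {𝕜 M : Type*} [CommRing 𝕜] [AddCommGroup M] [Module 𝕜 M] {a s : Module.End 𝕜 M} {c : 𝕜}

theorem LinearMap.ker_le_ker_of_eq_add_smul_mul_left (h : s = a + c • (a * s)) :
    LinearMap.ker s ≤ LinearMap.ker a := by
  intro x hx
  rw [LinearMap.mem_ker] at hx ⊢
  simpa [hx, eq_comm] using congrArg (· x) h

theorem LinearMap.ker_le_ker_of_eq_add_smul_mul_right (h : s = a + c • (s * a)) :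
    LinearMap.ker a ≤ LinearMap.ker s := by
  intro x hx
  rw [LinearMap.mem_ker] at hx ⊢
  simpa [hx] using congrArg (· x) h

theorem LinearMap.range_le_range_of_eq_add_smul_mul_left (h : s = a + c • (a * s)) :
    LinearMap.range s ≤ LinearMap.range a := by
  rintro _ ⟨x, rfl⟩
  have hx : s x = a x + c • a (s x) := by simpa using congrArg (· x) h
  exact ⟨x + c • s x, by rw [map_add, map_smul]; exact hx.symm⟩

theorem LinearMap.range_le_range_of_eq_add_smul_mul_right (h : s = a + c • (s * a)) :
    LinearMap.range a ≤ LinearMap.range s := by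
  rintro _ ⟨x, rfl⟩
  have hx : s x = a x + c • s (a x) := by simpa using congrArg (· x) h
  exact ⟨x - c • a x, by rw [map_sub, map_smul, hx, add_sub_cancel_right]⟩

end GeometricIdentity

theorem stmt3_general {X : Type*} [NormedAddCommGroup X] [NormedSpace ℂ X]
    (U : Set ℂ) (h0U : (0 : ℂ) ∈ U)
    (T : X →L[ℂ] X) (A : ℕ → X →L[ℂ] X) (R : ℂ → X →L[ℂ] X)
    (hsum : ∀ l ∈ U, HasSum (fun n : ℕ => l ^ n • A n) (R l))
    (hgen : ∀ l ∈ U, (T - l • 1) * R l * (T - l • 1) = T - l • 1 ∧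
                     R l * (T - l • 1) * R l = R l)
    (hcoef : ∀ n : ℕ, 1 ≤ n → A n = (A 0) ^ (n + 1)) :
    ∀ l ∈ U,
      LinearMap.ker (((T - l • 1) * R l : X →L[ℂ] X) : X →ₗ[ℂ] X) = LinearMap.ker ((T * A 0 : X →L[ℂ] X) : X →ₗ[ℂ] X) ∧
      LinearMap.range ((R l * (T - l • 1) : X →L[ℂ] X) : X →ₗ[ℂ] X) = LinearMap.range ((A 0 * T : X →L[ℂ] X) : X →ₗ[ℂ] X) := by
  have hpow : ∀ n, A n = A 0 ^ (n + 1) := fun n => by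
    rcases Nat.eq_zero_or_pos n with rfl | hn
    · exact (pow_one _).symm
    · exact hcoef n hn
  have hgeom : ∀ l ∈ U, HasSum (fun n : ℕ => l ^ n • A 0 ^ (n + 1)) (R l) := fun l hl =>
    (hsum l hl).congr_fun fun n => by rw [hpow n]
  have hR0 : R 0 = A 0 := by simpa using (hgeom 0 h0U).eq_add_smul_mul_left
  have hA0 : A 0 * T * A 0 = A 0 := by simpa [hR0] using (hgen 0 h0U).2
  intro l hl
  have hleft := congrArg ContinuousLinearMap.toLinearMap (hgeom l hl).eq_add_smul_mul_left
  have hright := congrArg ContinuousLinearMap.toLinearMap (hgeom l hl).eq_add_smul_mul_right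
  have hker : LinearMap.ker (R l : X →ₗ[ℂ] X) = LinearMap.ker (A 0 : X →ₗ[ℂ] X) :=
    (LinearMap.ker_le_ker_of_eq_add_smul_mul_left hleft).antisymm
      (LinearMap.ker_le_ker_of_eq_add_smul_mul_right hright)
  have hrange : LinearMap.range (R l : X →ₗ[ℂ] X) = LinearMap.range (A 0 : X →ₗ[ℂ] X) :=
    (LinearMap.range_le_range_of_eq_add_smul_mul_left hleft).antisymm
      (LinearMap.range_le_range_of_eq_add_smul_mul_right hright)
  have hRl := congrArg ContinuousLinearMap.toLinearMap (hgen l hl).2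
  have hA0' := congrArg ContinuousLinearMap.toLinearMap hA0
  exact ⟨(LinearMap.ker_mul_eq_of_mul_mul_eq hRl).trans
      (hker.trans (LinearMap.ker_mul_eq_of_mul_mul_eq hA0').symm),
    (LinearMap.range_mul_eq_of_mul_mul_eq hRl).trans
      (hrange.trans (LinearMap.range_mul_eq_of_mul_mul_eq hA0').symm)⟩

/-- Let `U ⊆ ℂ` be an open connected set containing `0`, let `T ∈ B(X)`, and let
`R(λ) = Σ_{n=0}^∞ λ^n Tₙ` (with `Tₙ ∈ B(X)`, the series converging on `U`) be such that `R(λ)`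
is a generalized inverse of `T - λI` for every `λ ∈ U`.  Set `P(λ) = (T - λI) ∘ R(λ)` and
`Q(λ) = R(λ) ∘ (T - λI)`.  If `Tₙ = T₀^(n+1)` for all `n ≥ 1`, then for every `λ ∈ U` one has
`ker (P(λ)) = ker (T ∘ T₀)` and `range (Q(λ)) = range (T₀ ∘ T)`. -/
theorem stmt3 {X : Type*} [NormedAddCommGroup X] [NormedSpace ℂ X] [CompleteSpace X]
    (U : Set ℂ) (hU : IsOpen U) (hUc : IsConnected U) (h0U : (0 : ℂ) ∈ U)
    (T : X →L[ℂ] X) (A : ℕ → X →L[ℂ] X) (R : ℂ → X →L[ℂ] X)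
    (hsum : ∀ l ∈ U, HasSum (fun n : ℕ => l ^ n • A n) (R l))
    (hgen : ∀ l ∈ U, (T - l • 1) * R l * (T - l • 1) = T - l • 1 ∧
                     R l * (T - l • 1) * R l = R l)
    (hcoef : ∀ n : ℕ, 1 ≤ n → A n = (A 0) ^ (n + 1)) :
    ∀ l ∈ U,
      LinearMap.ker (((T - l • 1) * R l : X →L[ℂ] X) : X →ₗ[ℂ] X) = LinearMap.ker ((T * A 0 : X →L[ℂ] X) : X →ₗ[ℂ] X) ∧
      LinearMap.range ((R l * (T - l • 1) : X →L[ℂ] X) : X →ₗ[ℂ] X) = LinearMap.range ((A 0 * T : X →L[ℂ] X) : X →ₗ[ℂ] X) :=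
  stmt3_general U h0U T A R hsum hgen hcoef
end

section
/- Let U ⊆ ℂ be an open connected set, let T ∈ B(X), and let R : U → B(X) be such that R(λ) is a generalized inverse of T − λI for every λ ∈ U. Set P(λ) = (T − λI)∘R(λ) and Q(λ) = R(λ)∘(T − λI). If there exist closed subspaces Z and W of X such that ker(P(λ)) = Z and range(Q(λ)) = W for all λ ∈ U, then R satisfies the resolvent identity on U, i.e. R(λ) − R(μ) = (λ − μ) R(λ)∘R(μ) for all λ, μ ∈ U. -/
/-! `P(μ) = (T - μ) R(μ)` and `Q(λ) = R(λ) (T - λ)` are idempotents, so the common kernel gives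
`P(λ) P(μ) = P(λ)` and the common range gives `Q(λ) Q(μ) = Q(μ)`. As `R` is a generalized inverse,
these reduce to `R(λ) (T - μ) R(μ) = R(λ)` and `R(λ) (T - λ) R(μ) = R(μ)`; subtracting them gives
`R(λ) - R(μ) = R(λ) ((T - μ) - (T - λ)) R(μ) = (λ - μ) R(λ) R(μ)`. -/

theorem sub_eq_mul_sub_mul_of_mul_eq {A : Type*} [Ring A] {a b r s : A}
    (hr : r * a * r = r) (hs : s * b * s = s)
    (hker : a * r * (b * s) = a * r) (hran : r * a * (s * b) = s * b) :
    r - s = r * (b - a) * s := by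
  have hrbs : r * b * s = r :=
    calc r * b * s = r * a * r * b * s := by rw [hr]
      _ = r * (a * r * (b * s)) := by noncomm_ring
      _ = r := by rw [hker, ← mul_assoc, hr]
  have hras : r * a * s = s :=
    calc r * a * s = r * a * (s * b * s) := by rw [hs]
      _ = r * a * (s * b) * s := by noncomm_ring
      _ = s := by rw [hran, hs]
  rw [mul_sub, sub_mul, hrbs, hras]

namespace ContinuousLinearMap

variable {R M : Type*} [Ring R] [TopologicalSpace M] [AddCommGroup M] [Module R M]

theorem mul_eq_left_of_ker_le {f p : M →L[R] M} (hp : IsIdempotentElem p)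
    (h : LinearMap.ker (p : M →ₗ[R] M) ≤ LinearMap.ker (f : M →ₗ[R] M)) : f * p = f :=
  coe_injective <|
    (LinearMap.IsIdempotentElem.comp_eq_left_iff (IsIdempotentElem.toLinearMap hp) _).mpr h

theorem mul_eq_right_of_range_le {p f : M →L[R] M} (hp : IsIdempotentElem p)
    (h : LinearMap.range (f : M →ₗ[R] M) ≤ LinearMap.range (p : M →ₗ[R] M)) : p * f = f :=
  coe_injective <|
    (LinearMap.IsIdempotentElem.comp_eq_right_iff (IsIdempotentElem.toLinearMap hp) _).mpr h

end ContinuousLinearMap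

theorem stmt4_general {X : Type*} [NormedAddCommGroup X] [NormedSpace ℂ X]
    (U : Set ℂ)
    (T : X →L[ℂ] X) (R : ℂ → X →L[ℂ] X)
    (hgen : ∀ l ∈ U, (T - l • 1) * R l * (T - l • 1) = T - l • 1 ∧
                     R l * (T - l • 1) * R l = R l)
    (Z W : Submodule ℂ X)
    (hker : ∀ l ∈ U, LinearMap.ker (((T - l • 1) * R l : X →L[ℂ] X) : X →ₗ[ℂ] X) = Z)
    (hran : ∀ l ∈ U, LinearMap.range (((R l * (T - l • 1) : X →L[ℂ] X) : X →ₗ[ℂ] X)) = W) :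
    ∀ l ∈ U, ∀ m ∈ U, R l - R m = (l - m) • (R l * R m) := by
  intro l hl m hm
  obtain ⟨-, hl₂⟩ := hgen l hl
  obtain ⟨hm₁, hm₂⟩ := hgen m hm
  have hP : IsIdempotentElem ((T - m • 1) * R m) := by
    rw [IsIdempotentElem, ← mul_assoc, hm₁]
  have hQ : IsIdempotentElem (R l * (T - l • 1)) := by
    rw [IsIdempotentElem, ← mul_assoc, hl₂]
  calc R l - R m = R l * ((T - m • 1) - (T - l • 1)) * R m :=
        sub_eq_mul_sub_mul_of_mul_eq hl₂ hm₂
          (ContinuousLinearMap.mul_eq_left_of_ker_le hP (by rw [hker l hl, hker m hm]))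
          (ContinuousLinearMap.mul_eq_right_of_range_le hQ (by rw [hran l hl, hran m hm]))
    _ = (l - m) • (R l * R m) := by
        rw [sub_sub_sub_cancel_left, ← sub_smul, mul_smul_comm, smul_mul_assoc, mul_one]

/-- Let `U ⊆ ℂ` be an open connected set, let `T ∈ B(X)`, and let
`R : U → B(X)` be such that `R(λ)` is a generalized inverse of `T - λI` for every `λ ∈ U`.
Set `P(λ) = (T - λI) ∘ R(λ)` and `Q(λ) = R(λ) ∘ (T - λI)`.  If there exist closed subspaces
`Z` and `W` of `X` such that `ker (P(λ)) = Z` and `range (Q(λ)) = W` for all `λ ∈ U`, then `R`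
satisfies the resolvent identity on `U`:
`R(λ) - R(μ) = (λ - μ) R(λ) ∘ R(μ)` for all `λ, μ ∈ U`. -/
theorem stmt4 {X : Type*} [NormedAddCommGroup X] [NormedSpace ℂ X] [CompleteSpace X]
    (U : Set ℂ) (hU : IsOpen U) (hUc : IsConnected U)
    (T : X →L[ℂ] X) (R : ℂ → X →L[ℂ] X)
    (hgen : ∀ l ∈ U, (T - l • 1) * R l * (T - l • 1) = T - l • 1 ∧
                     R l * (T - l • 1) * R l = R l)
    (Z W : Submodule ℂ X) (hZ : IsClosed (Z : Set X)) (hW : IsClosed (W : Set X))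
    (hker : ∀ l ∈ U, LinearMap.ker (((T - l • 1) * R l : X →L[ℂ] X) : X →ₗ[ℂ] X) = Z)
    (hran : ∀ l ∈ U, LinearMap.range (((R l * (T - l • 1) : X →L[ℂ] X) : X →ₗ[ℂ] X)) = W) :
    ∀ l ∈ U, ∀ m ∈ U, R l - R m = (l - m) • (R l * R m) :=
  stmt4_general U T R hgen Z W hker hran
end

section
/- Let U ⊆ ℂ be an open connected set containing 0, let T ∈ B(X), and let R(λ) = Σ_{n=0}^∞ λ^n T_n be an analytic function on U such that R(λ) is a generalized inverse of T − λI for every λ ∈ U. Then T_n = T_0^(n+1) for all n ≥ 1 if and only if R satisfies the resolvent identity R(λ) − R(μ) = (λ − μ) R(λ)∘R(μ) for all λ, μ ∈ U. -/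
/-!
If `Aₙ = A₀ⁿ⁺¹`, then `R λ = ∑ λⁿ A₀ⁿ⁺¹` satisfies `R λ (1 - λA₀) = A₀ = (1 - λA₀) R λ` by
telescoping, and these two identities alone give the resolvent identity by pure algebra.
Conversely, the resolvent identity at `μ = 0` gives `R λ = A₀ + λ R λ A₀` near `0`, and comparing
power-series coefficients at `0` yields `Aₙ₊₁ = Aₙ A₀`.
-/

open Filter Topology

theorem HasSum.hasSum_sub_succ {G : Type*} [AddCommGroup G] [TopologicalSpace G]
    [IsTopologicalAddGroup G] {f : ℕ → G} {s : G} (h : HasSum f s) :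
    HasSum (fun n => f n - f (n + 1)) (f 0) := by
  have hshift : HasSum (fun n => f (n + 1)) (s - f 0) := by
    simpa using (hasSum_nat_add_iff' 1).mpr h
  simpa using h.sub hshift

section Algebra

variable {𝕜 E : Type*} [CommRing 𝕜] [Ring E] [Algebra 𝕜 E]

theorem sub_eq_smul_mul_of_mul_one_sub_smul {a x y : E} {l m : 𝕜}
    (hx : x * (1 - l • a) = a) (hy : (1 - m • a) * y = a) :
    x - y = (l - m) • (x * y) := by
  rw [mul_sub, mul_one, mul_smul_comm] at hx
  rw [sub_mul, one_mul, smul_mul_assoc] at hy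
  have hxy : (x - l • (x * a)) * y = a * y := congrArg (· * y) hx
  have hxy' : x * (y - m • (a * y)) = x * a := congrArg (x * ·) hy
  rw [sub_mul, smul_mul_assoc] at hxy
  rw [mul_sub, mul_smul_comm, ← mul_assoc] at hxy'
  -- `x = a + l • x a` and `y = a + m • a y`, while `xy` is `xa + m • xay` and `ay + l • xay`
  linear_combination (norm := module) hx - hy + m • hxy - l • hxy'

end Algebra

theorem HasSum.mul_one_sub_smul_eq {𝕜 E : Type*} [CommSemiring 𝕜] [Ring E] [Algebra 𝕜 E]
    [TopologicalSpace E] [IsTopologicalRing E] [T2Space E] {z : 𝕜} {a r : E}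
    (h : HasSum (fun n => z ^ n • a ^ (n + 1)) r) :
    r * (1 - z • a) = a ∧ (1 - z • a) * r = a := by
  have htel := h.hasSum_sub_succ
  simp only [pow_zero, one_smul, Nat.zero_add, pow_one] at htel
  constructor
  · refine (h.mul_right (1 - z • a)).unique (htel.congr_fun fun n => ?_)
    rw [mul_sub, mul_one, smul_mul_assoc, mul_smul_comm, smul_smul, ← pow_succ, ← pow_succ]
  · refine (h.mul_left (1 - z • a)).unique (htel.congr_fun fun n => ?_)
    rw [sub_mul, one_mul, smul_mul_assoc, mul_smul_comm, smul_smul, ← pow_succ', ← pow_succ']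

section PowerSeries

variable {𝕜 E : Type*} [NontriviallyNormedField 𝕜] [NormedAddCommGroup E] [NormedSpace 𝕜 E]

theorem eq_zero_of_eventually_hasSum_pow_smul {c : ℕ → E}
    (h : ∀ᶠ z in 𝓝 (0 : 𝕜), HasSum (fun n => z ^ n • c n) 0) : c = 0 := by
  set p : FormalMultilinearSeries 𝕜 𝕜 E :=
    fun n => ContinuousMultilinearMap.mkPiRing 𝕜 (Fin n) (c n)
  have hp : ∀ n y, (p n fun _ => y) = y ^ n • c n := fun n y => by simp [p]
  obtain ⟨ε, hε, hball⟩ := Metric.eventually_nhds_iff_ball.mp h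
  obtain ⟨w, hw0, hwε⟩ := NormedField.exists_norm_lt 𝕜 hε
  have hrad : (‖w‖₊ : ENNReal) ≤ p.radius := by
    refine p.le_radius_of_tendsto (l := 0) ?_
    simpa [p, norm_smul, mul_comm] using
      (hball w (by simpa using hwε)).summable.tendsto_atTop_zero.norm
  have hseries : HasFPowerSeriesOnBall 0 p 0 ‖w‖₊ := by
    refine ⟨hrad, by simpa using hw0, fun {y} hy => ?_⟩
    have hyw : ‖y‖ < ‖w‖ := by simpa using hy
    simpa [hp] using hball y (by simpa using hyw.trans hwε)
  have hp0 : p = 0 := hseries.hasFPowerSeriesAt.eq_zero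
  ext n
  simpa [hp] using congrArg (fun q : FormalMultilinearSeries 𝕜 𝕜 E => q n fun _ => 1) hp0

theorem eq_of_eventually_hasSum_pow_smul {c d : ℕ → E} {f : 𝕜 → E}
    (hc : ∀ᶠ z in 𝓝 (0 : 𝕜), HasSum (fun n => z ^ n • c n) (f z))
    (hd : ∀ᶠ z in 𝓝 (0 : 𝕜), HasSum (fun n => z ^ n • d n) (f z)) : c = d := by
  refine sub_eq_zero.mp (eq_zero_of_eventually_hasSum_pow_smul (𝕜 := 𝕜) ?_)
  filter_upwards [hc, hd] with z hcz hdz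
  simpa [smul_sub] using hcz.sub hdz

theorem coeff_succ_eq_of_eventually_hasSum {c d : ℕ → E} {g : 𝕜 → E}
    (hc : ∀ᶠ z in 𝓝 (0 : 𝕜), HasSum (fun n => z ^ n • c n) (c 0 + z • g z))
    (hd : ∀ᶠ z in 𝓝 (0 : 𝕜), HasSum (fun n => z ^ n • d n) (g z)) (n : ℕ) :
    c (n + 1) = d n := by
  have hcons : ∀ᶠ z in 𝓝 (0 : 𝕜),
      HasSum (fun n => z ^ n • (Nat.casesOn n (c 0) d : E)) (c 0 + z • g z) := by
    filter_upwards [hd] with z hz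
    rw [← hasSum_nat_add_iff' 1]
    simpa [pow_succ', mul_smul] using hz.const_smul z
  exact congrFun (eq_of_eventually_hasSum_pow_smul hc hcons) (n + 1)

end PowerSeries

theorem hasSum_zero_pow_smul {𝕜 E : Type*} [MonoidWithZero 𝕜] [AddCommMonoid E]
    [MulActionWithZero 𝕜 E] [TopologicalSpace E] (c : ℕ → E) :
    HasSum (fun n => (0 : 𝕜) ^ n • c n) (c 0) := by
  simpa using hasSum_single (f := fun n => (0 : 𝕜) ^ n • c n) 0 fun n hn => by simp [hn]

theorem stmt6_general {X : Type*} [NormedAddCommGroup X] [NormedSpace ℂ X]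
    (U : Set ℂ) (hU : IsOpen U) (h0U : (0 : ℂ) ∈ U)
    (A : ℕ → X →L[ℂ] X) (R : ℂ → X →L[ℂ] X)
    (hsum : ∀ l ∈ U, HasSum (fun n : ℕ => l ^ n • A n) (R l)) :
    (∀ n : ℕ, 1 ≤ n → A n = (A 0) ^ (n + 1)) ↔
    (∀ l ∈ U, ∀ m ∈ U, R l - R m = (l - m) • (R l * R m)) := by
  have hR0 : R 0 = A 0 := (hsum 0 h0U).unique (hasSum_zero_pow_smul A)
  constructor
  · intro hA l hl m hm
    have hpow : ∀ n, A n = A 0 ^ (n + 1) := fun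
      | 0 => (pow_one _).symm
      | k + 1 => hA (k + 1) k.succ_pos
    have hgeom : ∀ z ∈ U, HasSum (fun n => z ^ n • A 0 ^ (n + 1)) (R z) :=
      fun z hz => (hsum z hz).congr_fun fun n => by rw [← hpow n]
    exact sub_eq_smul_mul_of_mul_one_sub_smul (hgeom l hl).mul_one_sub_smul_eq.1
      (hgeom m hm).mul_one_sub_smul_eq.2
  · intro hres
    have hnhds : ∀ᶠ l in 𝓝 (0 : ℂ), l ∈ U := hU.mem_nhds h0U
    have hrec : ∀ n, A (n + 1) = A n * A 0 := by
      refine coeff_succ_eq_of_eventually_hasSum (g := fun l => R l * A 0) ?_ ?_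
      · filter_upwards [hnhds] with l hl
        have hR : R l = A 0 + l • (R l * A 0) := by
          simpa [hR0, sub_eq_iff_eq_add'] using hres l hl 0 h0U
        exact hR ▸ hsum l hl
      · filter_upwards [hnhds] with l hl
        simpa only [smul_mul_assoc] using (hsum l hl).mul_right (A 0)
    have hpow : ∀ n, A n = A 0 ^ (n + 1) := by
      intro n
      induction n with
      | zero => exact (pow_one _).symm
      | succ k ih => rw [hrec, ih, ← pow_succ]
    exact fun n _ => hpow n

/-- Let `U ⊆ ℂ` be an open connected set containing `0`, let `T ∈ B(X)`, and let
`R(λ) = Σ_{n=0}^∞ λ^n Tₙ` be an analytic function on `U` such that `R(λ)` is a generalized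
inverse of `T - λI` for every `λ ∈ U`.  Then `Tₙ = T₀^(n+1)` for all `n ≥ 1` if and only if `R`
satisfies the resolvent identity `R(λ) - R(μ) = (λ - μ) R(λ) ∘ R(μ)` for all `λ, μ ∈ U`. -/
theorem stmt6 {X : Type*} [NormedAddCommGroup X] [NormedSpace ℂ X] [CompleteSpace X]
    (U : Set ℂ) (hU : IsOpen U) (hUc : IsConnected U) (h0U : (0 : ℂ) ∈ U)
    (T : X →L[ℂ] X) (A : ℕ → X →L[ℂ] X) (R : ℂ → X →L[ℂ] X)
    (hsum : ∀ l ∈ U, HasSum (fun n : ℕ => l ^ n • A n) (R l))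
    (hgen : ∀ l ∈ U, (T - l • 1) * R l * (T - l • 1) = T - l • 1 ∧
                     R l * (T - l • 1) * R l = R l) :
    (∀ n : ℕ, 1 ≤ n → A n = (A 0) ^ (n + 1)) ↔
    (∀ l ∈ U, ∀ m ∈ U, R l - R m = (l - m) • (R l * R m)) :=
  stmt6_general U hU h0U A R hsum
end

section
/- Let T ∈ B(X) and let U ⊆ ℂ be an open connected set. Suppose there exist two families of bounded projections P(λ), Q(λ) ∈ B(X), λ ∈ U, depending continuously on λ, such that range(P(λ)) = range(T − λI) and ker(Q(λ)) = ker(T − λI) for all λ ∈ U, and such that P(λ)∘P(μ) = P(λ) and Q(λ)∘Q(μ) = Q(μ) for all λ, μ ∈ U. Then there exists a generalized resolvent of T on U, i.e. a function Rg : U → B(X) such that Rg(λ) is a generalized inverse of T − λI for all λ ∈ U and Rg(λ) − Rg(μ) = (λ − μ) Rg(λ)∘Rg(μ) for all λ, μ ∈ U. -/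
/-!
On `range Q(λ)` the operator `T - λ` restricts to a bijection onto the closed subspace
`range P(λ)`, so by the open mapping theorem it has a bounded inverse there; precomposing it
with `P(λ)` gives `Rg(λ)` with `(T - λ) Rg(λ) = P(λ)`, `Rg(λ) (T - λ) = Q(λ)` and
`Q(λ) Rg(λ) = Rg(λ)`. From these relations the resolvent identity is pure ring algebra:
`Rg(λ) = Rg(λ) P(λ) P(μ) = Rg(λ) (T - μ) Rg(μ) = Q(λ) Rg(μ) + (λ - μ) Rg(λ) Rg(μ)`, and
`Q(λ) Rg(μ) = Q(λ) Q(μ) Rg(μ) = Rg(μ)`.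
-/

namespace ContinuousLinearMap

section Ring

variable {R M : Type*} [Ring R] [TopologicalSpace M] [AddCommGroup M] [Module R M]

theorem IsIdempotentElem.mul_eq_right_of_range_eq {p a : M →L[R] M} (hp : IsIdempotentElem p)
    (h : LinearMap.range (p : M →ₗ[R] M) = LinearMap.range (a : M →ₗ[R] M)) : p * a = a := by
  have := (LinearMap.IsIdempotentElem.comp_eq_right_iff (IsIdempotentElem.toLinearMap hp)
    (a : M →ₗ[R] M)).2 h.ge
  ext x
  exact LinearMap.congr_fun this x

theorem IsIdempotentElem.mul_eq_left_of_ker_eq {q a : M →L[R] M} (hq : IsIdempotentElem q)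
    (h : LinearMap.ker (q : M →ₗ[R] M) = LinearMap.ker (a : M →ₗ[R] M)) : a * q = a := by
  have := (LinearMap.IsIdempotentElem.comp_eq_left_iff (IsIdempotentElem.toLinearMap hq)
    (a : M →ₗ[R] M)).2 h.le
  ext x
  exact LinearMap.congr_fun this x

end Ring

variable {𝕜 E : Type*} [NontriviallyNormedField 𝕜] [NormedAddCommGroup E] [NormedSpace 𝕜 E]
  [CompleteSpace E]

theorem exists_mul_eq_of_range_eq_of_ker_eq {a p q : E →L[𝕜] E} (hp : IsIdempotentElem p)
    (hq : IsIdempotentElem q)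
    (hpa : LinearMap.range (p : E →ₗ[𝕜] E) = LinearMap.range (a : E →ₗ[𝕜] E))
    (hqa : LinearMap.ker (q : E →ₗ[𝕜] E) = LinearMap.ker (a : E →ₗ[𝕜] E)) :
    ∃ s : E →L[𝕜] E, a * s = p ∧ s * a = q ∧ q * s = s := by
  have hq_fix : ∀ x ∈ LinearMap.range (q : E →ₗ[𝕜] E), q x = x := fun _ ↦
    (LinearMap.IsIdempotentElem.mem_range_iff (IsIdempotentElem.toLinearMap hq)).1
  set M := LinearMap.range (q : E →ₗ[𝕜] E)
  set N := LinearMap.range (p : E →ₗ[𝕜] E)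
  have : CompleteSpace M := (IsIdempotentElem.isClosed_range hq).completeSpace_coe
  have : CompleteSpace N := (IsIdempotentElem.isClosed_range hp).completeSpace_coe
  have haq : a * q = a := IsIdempotentElem.mul_eq_left_of_ker_eq hq hqa
  have hpa' : p * a = a := IsIdempotentElem.mul_eq_right_of_range_eq hp hpa
  have hmaps : ∀ x ∈ M, a x ∈ N := fun x _ ↦ hpa ▸ LinearMap.mem_range_self _ x
  set f : M →L[𝕜] N := a.restrict hmaps
  have hinj : LinearMap.ker (f : M →ₗ[𝕜] N) = ⊥ := by
    refine LinearMap.ker_eq_bot'.2 fun x hx ↦ Subtype.ext ?_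
    have hax : (x : E) ∈ LinearMap.ker (q : E →ₗ[𝕜] E) := hqa ▸ congrArg Subtype.val hx
    rw [← hq_fix x x.2]
    exact hax
  have hsurj : LinearMap.range (f : M →ₗ[𝕜] N) = ⊤ := by
    refine LinearMap.range_eq_top.2 fun y ↦ ?_
    obtain ⟨w, hw⟩ : (y : E) ∈ LinearMap.range (a : E →ₗ[𝕜] E) := hpa ▸ y.2
    refine ⟨⟨q w, LinearMap.mem_range_self _ w⟩, Subtype.ext ?_⟩
    exact (DFunLike.congr_fun haq w).trans hw
  set e := ContinuousLinearEquiv.ofBijective f hinj hsurj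
  refine ⟨M.subtypeL ∘L (e.symm : N →L[𝕜] M) ∘L p.codRestrict N (LinearMap.mem_range_self _),
    ?_, ?_, ?_⟩ <;> ext x
  · exact congrArg Subtype.val (e.apply_symm_apply _)
  · have hex : e ⟨q x, LinearMap.mem_range_self _ x⟩ =
        p.codRestrict N (LinearMap.mem_range_self _) (a x) :=
      Subtype.ext ((DFunLike.congr_fun haq x).trans (DFunLike.congr_fun hpa' x).symm)
    exact congrArg Subtype.val (e.symm_apply_eq.2 hex.symm)
  · exact hq_fix _ (Subtype.prop _)

end ContinuousLinearMap

section Algebra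

variable {𝕜 R : Type*} [CommRing 𝕜] [Ring R] [Algebra 𝕜 R]

theorem sub_eq_smul_mul_of_mul_eq_of_mul_eq {t s₁ s₂ p₁ p₂ q₁ q₂ : R} {l m : 𝕜}
    (hts₁ : (t - l • 1) * s₁ = p₁) (hs₁t : s₁ * (t - l • 1) = q₁) (hqs₁ : q₁ * s₁ = s₁)
    (hts₂ : (t - m • 1) * s₂ = p₂) (hqs₂ : q₂ * s₂ = s₂)
    (hp : p₁ * p₂ = p₁) (hq : q₁ * q₂ = q₂) :
    s₁ - s₂ = (l - m) • (s₁ * s₂) := by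
  have hsp₁ : s₁ * p₁ = s₁ := by rw [← hts₁, ← mul_assoc, hs₁t, hqs₁]
  have hqs : q₁ * s₂ = s₂ := by rw [← hqs₂, ← mul_assoc, hq]
  have hshift : t - m • 1 = (t - l • 1) + (l - m) • (1 : R) := by
    rw [sub_smul]; abel
  rw [sub_eq_iff_eq_add']
  calc s₁ = s₁ * p₁ * p₂ := by rw [mul_assoc, hp, hsp₁]
    _ = s₁ * (t - m • 1) * s₂ := by rw [hsp₁, ← hts₂, mul_assoc]
    _ = s₂ + (l - m) • (s₁ * s₂) := by
      rw [hshift, mul_add, add_mul, hs₁t, hqs, mul_smul_comm, smul_mul_assoc, mul_one]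

end Algebra

theorem stmt7_general {X : Type*} [NormedAddCommGroup X] [NormedSpace ℂ X] [CompleteSpace X]
    (T : X →L[ℂ] X) (U : Set ℂ)
    (P Q : ℂ → X →L[ℂ] X)
    (hPproj : ∀ l ∈ U, P l * P l = P l) (hQproj : ∀ l ∈ U, Q l * Q l = Q l)
    (hPran : ∀ l ∈ U, LinearMap.range (P l : X →ₗ[ℂ] X) = LinearMap.range ((T - l • 1 : X →L[ℂ] X) : X →ₗ[ℂ] X))
    (hQker : ∀ l ∈ U, LinearMap.ker (Q l : X →ₗ[ℂ] X) = LinearMap.ker ((T - l • 1 : X →L[ℂ] X) : X →ₗ[ℂ] X))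
    (hPP : ∀ l ∈ U, ∀ m ∈ U, P l * P m = P l)
    (hQQ : ∀ l ∈ U, ∀ m ∈ U, Q l * Q m = Q m) :
    ∃ Rg : ℂ → X →L[ℂ] X,
      (∀ l ∈ U, (T - l • 1) * Rg l * (T - l • 1) = T - l • 1 ∧
                Rg l * (T - l • 1) * Rg l = Rg l) ∧
      (∀ l ∈ U, ∀ m ∈ U, Rg l - Rg m = (l - m) • (Rg l * Rg m)) := by
  have hinv : ∀ l ∈ U, ∃ s : X →L[ℂ] X,
      (T - l • 1) * s = P l ∧ s * (T - l • 1) = Q l ∧ Q l * s = s := fun l hl ↦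
    ContinuousLinearMap.exists_mul_eq_of_range_eq_of_ker_eq (hPproj l hl) (hQproj l hl)
      (hPran l hl) (hQker l hl)
  choose! Rg hRg using hinv
  refine ⟨Rg, fun l hl ↦ ?_, fun l hl m hm ↦ ?_⟩
  · obtain ⟨hTR, hRT, hQR⟩ := hRg l hl
    have hPT :=
      ContinuousLinearMap.IsIdempotentElem.mul_eq_right_of_range_eq (hPproj l hl) (hPran l hl)
    exact ⟨by rw [hTR, hPT], by rw [hRT, hQR]⟩
  · obtain ⟨hTR, hRT, hQR⟩ := hRg l hl
    obtain ⟨hTR', -, hQR'⟩ := hRg m hm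
    exact sub_eq_smul_mul_of_mul_eq_of_mul_eq hTR hRT hQR hTR' hQR' (hPP l hl m hm)
      (hQQ l hl m hm)

/-- Let `T ∈ B(X)` and let `U ⊆ ℂ` be an open connected set.  Suppose there exist
two families of bounded projections `P(λ), Q(λ) ∈ B(X)`, `λ ∈ U`, depending continuously on
`λ`, such that `range (P(λ)) = range (T - λI)` and `ker (Q(λ)) = ker (T - λI)` for all
`λ ∈ U`, and such that `P(λ) ∘ P(μ) = P(λ)` and `Q(λ) ∘ Q(μ) = Q(μ)` for all `λ, μ ∈ U`.
Then there exists a generalized resolvent of `T` on `U`: a function `Rg : U → B(X)` such that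
`Rg(λ)` is a generalized inverse of `T - λI` for all `λ ∈ U` and
`Rg(λ) - Rg(μ) = (λ - μ) Rg(λ) ∘ Rg(μ)` for all `λ, μ ∈ U`. -/
theorem stmt7 {X : Type*} [NormedAddCommGroup X] [NormedSpace ℂ X] [CompleteSpace X]
    (T : X →L[ℂ] X) (U : Set ℂ) (hU : IsOpen U) (hUc : IsConnected U)
    (P Q : ℂ → X →L[ℂ] X)
    (hPcont : ContinuousOn P U) (hQcont : ContinuousOn Q U)
    (hPproj : ∀ l ∈ U, P l * P l = P l) (hQproj : ∀ l ∈ U, Q l * Q l = Q l)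
    (hPran : ∀ l ∈ U, LinearMap.range (P l : X →ₗ[ℂ] X) = LinearMap.range ((T - l • 1 : X →L[ℂ] X) : X →ₗ[ℂ] X))
    (hQker : ∀ l ∈ U, LinearMap.ker (Q l : X →ₗ[ℂ] X) = LinearMap.ker ((T - l • 1 : X →L[ℂ] X) : X →ₗ[ℂ] X))
    (hPP : ∀ l ∈ U, ∀ m ∈ U, P l * P m = P l)
    (hQQ : ∀ l ∈ U, ∀ m ∈ U, Q l * Q m = Q m) :
    ∃ Rg : ℂ → X →L[ℂ] X,
      (∀ l ∈ U, (T - l • 1) * Rg l * (T - l • 1) = T - l • 1 ∧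
                Rg l * (T - l • 1) * Rg l = Rg l) ∧
      (∀ l ∈ U, ∀ m ∈ U, Rg l - Rg m = (l - m) • (Rg l * Rg m)) :=
  stmt7_general T U P Q hPproj hQproj hPran hQker hPP hQQ
end

section
/- Let T ∈ B(X) and let U ⊆ ℂ be an open connected set. There exists a generalized resolvent of T on U if and only if there exists an analytic function R : U → B(X) such that R(λ) is a generalized inverse of T − λI for all λ ∈ U and R'(λ) = R(λ)² for all λ ∈ U. -/
/-!
The resolvent identity says that the difference quotient `(R l - R m) / (l - m)` equals
`R l * R m`; together with the bound `‖R l - R m‖ ≤ 2 ‖R m‖² ‖l - m‖` near `m`, which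
makes `R` continuous, this gives `R' = R²`, and a holomorphic function is analytic.
Conversely, for fixed `m` the defect `φ z = R z (1 - (z - m) R m) - R m` solves the linear
equation `φ' = R φ` with `φ m = 0`. Gronwall's inequality along segments makes `φ` vanish on
a ball around `m`, and the identity theorem propagates this to the connected set `U`.
-/

open Filter Topology Metric Set

section

variable {𝕜 A : Type*} [NontriviallyNormedField 𝕜] [NormedRing A] [NormedAlgebra 𝕜 A]

def ResolventIdentity (R : 𝕜 → A) (U : Set 𝕜) : Prop :=
  ∀ l ∈ U, ∀ m ∈ U, R l - R m = (l - m) • (R l * R m)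

namespace ResolventIdentity

variable {R : 𝕜 → A} {U : Set 𝕜} {l m : 𝕜}

theorem norm_sub_le (hR : ResolventIdentity R U) (hl : l ∈ U) (hm : m ∈ U)
    (hlm : ‖l - m‖ * ‖R m‖ ≤ 1 / 2) : ‖R l - R m‖ ≤ 2 * ‖R m‖ ^ 2 * ‖l - m‖ := by
  have key : ‖R l - R m‖ ≤ ‖l - m‖ * ((‖R l - R m‖ + ‖R m‖) * ‖R m‖) :=
    calc ‖R l - R m‖ = ‖l - m‖ * ‖R l * R m‖ := by rw [hR l hl m hm, norm_smul]
      _ ≤ ‖l - m‖ * (‖R l‖ * ‖R m‖) := by gcongr; exact norm_mul_le _ _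
      _ ≤ ‖l - m‖ * ((‖R l - R m‖ + ‖R m‖) * ‖R m‖) := by
        gcongr; exact norm_le_norm_sub_add _ _
  nlinarith [norm_nonneg (l - m), norm_nonneg (R l - R m), norm_nonneg (R m)]

theorem continuousAt (hR : ResolventIdentity R U) (hm : U ∈ 𝓝 m) : ContinuousAt R m := by
  have hsmall : ∀ᶠ l in 𝓝 m, ‖l - m‖ * ‖R m‖ ≤ 1 / 2 := by
    have := (tendsto_norm_sub_self m).mul_const ‖R m‖
    rw [zero_mul] at this
    exact this.eventually_le_const (by norm_num)
  have hlin : Tendsto (fun l ↦ 2 * ‖R m‖ ^ 2 * ‖l - m‖) (𝓝 m) (𝓝 0) := by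
    simpa using (tendsto_norm_sub_self m).const_mul (2 * ‖R m‖ ^ 2)
  rw [ContinuousAt, tendsto_iff_norm_sub_tendsto_zero]
  refine squeeze_zero' (Eventually.of_forall fun _ ↦ norm_nonneg _) ?_ hlin
  filter_upwards [hm, hsmall] with l hl hlm using hR.norm_sub_le hl (mem_of_mem_nhds hm) hlm

theorem hasDerivAt (hR : ResolventIdentity R U) (hm : U ∈ 𝓝 m) :
    HasDerivAt R (R m * R m) m := by
  rw [hasDerivAt_iff_tendsto_slope]
  have hslope : ∀ᶠ l in 𝓝[≠] m, R l * R m = slope R m l := by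
    filter_upwards [nhdsWithin_le_nhds hm, self_mem_nhdsWithin] with l hl hne
    rw [slope_def_module, hR l hl m (mem_of_mem_nhds hm), smul_smul,
      inv_mul_cancel₀ (sub_ne_zero.2 hne), one_smul]
  exact ((hR.continuousAt hm).tendsto.mono_left nhdsWithin_le_nhds |>.mul_const _).congr' hslope

end ResolventIdentity

end

theorem Convex.eqOn_zero_of_norm_deriv_le {E : Type*} [NormedAddCommGroup E] [NormedSpace ℂ E]
    {φ φ' : ℂ → E} {s : Set ℂ} (hs : Convex ℝ s) {C : ℝ}
    (hφ : ∀ z ∈ s, HasDerivAt φ (φ' z) z) (hφ' : ∀ z ∈ s, ‖φ' z‖ ≤ C * ‖φ z‖)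
    {m : ℂ} (hm : m ∈ s) (hφm : φ m = 0) : EqOn φ 0 s := by
  intro l hl
  set γ : ℝ → ℂ := fun t ↦ m + t • (l - m)
  have hγs : ∀ t ∈ Icc (0 : ℝ) 1, γ t ∈ s := fun t ht ↦ hs.add_smul_sub_mem hm hl ht
  have hγ' : ∀ t ∈ Icc (0 : ℝ) 1, HasDerivAt (φ ∘ γ) ((l - m) • φ' (γ t)) t := fun t ht ↦
    (hφ _ (hγs t ht)).scomp t <| by
      simpa [γ] using ((hasDerivAt_id t).smul_const (l - m)).const_add m
  have hbound : ∀ t ∈ Ico (0 : ℝ) 1, ‖(l - m) • φ' (γ t)‖ ≤ ‖l - m‖ * C * ‖(φ ∘ γ) t‖ + 0 := by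
    intro t ht
    rw [add_zero, norm_smul, mul_assoc]
    exact mul_le_mul_of_nonneg_left (hφ' _ (hγs t (Ico_subset_Icc_self ht))) (norm_nonneg _)
  have := norm_le_gronwallBound_of_norm_deriv_right_le
    (fun t ht ↦ (hγ' t ht).continuousAt.continuousWithinAt)
    (fun t ht ↦ (hγ' t (Ico_subset_Icc_self ht)).hasDerivWithinAt)
    (by simp [γ, hφm] : ‖(φ ∘ γ) 0‖ ≤ 0) hbound 1 (by norm_num)
  simpa [gronwallBound_ε0_δ0, γ] using this

theorem ResolventIdentity.of_hasDerivAt_sq {A : Type*} [NormedRing A] [NormedAlgebra ℂ A]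
    {R : ℂ → A} {U : Set ℂ} (hU : IsOpen U) (hUc : IsPreconnected U)
    (hRan : AnalyticOnNhd ℂ R U) (hR' : ∀ z ∈ U, HasDerivAt R (R z * R z) z) :
    ResolventIdentity R U := by
  intro l hl m hm
  set φ : ℂ → A := fun z ↦ R z * (1 - (z - m) • R m) - R m
  have hφ' : ∀ z ∈ U, HasDerivAt φ (R z * φ z) z := by
    intro z hz
    have hlin : HasDerivAt (fun z : ℂ ↦ 1 - (z - m) • R m) (-R m) z := by
      simpa using (((hasDerivAt_id z).sub_const m).smul_const (R m)).const_sub 1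
    refine (((hR' z hz).mul hlin).sub_const (R m)).congr_deriv ?_
    simp only [φ, mul_add, mul_neg, mul_assoc, sub_eq_add_neg]
  obtain ⟨r, hr, hball⟩ : ∃ r > 0, ball m r ⊆ U ∩ {z | ‖R z‖ < ‖R m‖ + 1} :=
    Metric.mem_nhds_iff.mp <| inter_mem (hU.mem_nhds hm) <|
      (hRan m hm).continuousAt.norm.eventually (gt_mem_nhds (lt_add_one _))
  have hlocal : EqOn φ 0 (ball m r) := by
    refine (convex_ball m r).eqOn_zero_of_norm_deriv_le (C := ‖R m‖ + 1)
      (fun z hz ↦ hφ' z (hball hz).1) (fun z hz ↦ ?_) (mem_ball_self hr) (by simp [φ])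
    exact (norm_mul_le _ _).trans (by gcongr; exact (hball hz).2.le)
  have hφan : AnalyticOnNhd ℂ φ U :=
    (hRan.mul (analyticOnNhd_const.sub ((analyticOnNhd_id.sub analyticOnNhd_const).smul
      analyticOnNhd_const))).sub analyticOnNhd_const
  have hglobal : EqOn φ 0 U := hφan.eqOn_zero_of_preconnected_of_eventuallyEq_zero hUc hm <|
    eventuallyEq_of_mem (ball_mem_nhds m hr) hlocal
  have hφl := hglobal hl
  simp only [φ, Pi.zero_apply, mul_sub, mul_one, mul_smul_comm] at hφl
  rw [← sub_eq_zero, ← hφl]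
  abel

/-- Let `T ∈ B(X)` and let `U ⊆ ℂ` be an open connected set.  There exists a
generalized resolvent of `T` on `U` if and only if there exists an analytic function
`R : U → B(X)` such that `R(λ)` is a generalized inverse of `T - λI` for all `λ ∈ U` and
`R'(λ) = R(λ)²` for all `λ ∈ U`. -/
theorem stmt8 {X : Type*} [NormedAddCommGroup X] [NormedSpace ℂ X] [CompleteSpace X]
    (T : X →L[ℂ] X) (U : Set ℂ) (hU : IsOpen U) (hUc : IsConnected U) :
    (∃ Rg : ℂ → X →L[ℂ] X,
      (∀ l ∈ U, (T - l • 1) * Rg l * (T - l • 1) = T - l • 1 ∧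
                Rg l * (T - l • 1) * Rg l = Rg l) ∧
      (∀ l ∈ U, ∀ m ∈ U, Rg l - Rg m = (l - m) • (Rg l * Rg m))) ↔
    (∃ R : ℂ → X →L[ℂ] X, AnalyticOnNhd ℂ R U ∧
      (∀ l ∈ U, (T - l • 1) * R l * (T - l • 1) = T - l • 1 ∧
                R l * (T - l • 1) * R l = R l) ∧
      (∀ l ∈ U, HasDerivAt R (R l * R l) l)) := by
  constructor
  · rintro ⟨Rg, hgi, hri⟩
    have hd : ∀ l ∈ U, HasDerivAt Rg (Rg l * Rg l) l :=
      fun l hl ↦ ResolventIdentity.hasDerivAt hri (hU.mem_nhds hl)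
    exact ⟨Rg, DifferentiableOn.analyticOnNhd
      (fun l hl ↦ (hd l hl).differentiableAt.differentiableWithinAt) hU, hgi, hd⟩
  · rintro ⟨R, hR, hgi, hd⟩
    exact ⟨R, hgi, ResolventIdentity.of_hasDerivAt_sq hU hUc.isPreconnected hR hd⟩
end

section
/- Let T ∈ B(X) be Fredholm and let S₀ ∈ B(X) be a generalized inverse of T. Then T − λI is Fredholm for every λ ∈ ℂ if and only if S₀ − λI is Fredholm for every λ ≠ 0 (i.e. the essential spectrum of S₀ is contained in {0}). -/
/-!
By Atkinson's theorem an operator is Fredholm exactly when it is invertible modulo finite-rank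
operators, so `T - λ` is Fredholm iff `λ` lies outside the spectrum of the class of `T` in the
quotient algebra. There the class of `T` is a unit, and `T S₀ T = T` forces the class of `S₀` to
be its inverse. The nonzero spectrum of an inverse consists of the reciprocals of the spectrum,
and a unit never has `0` in its spectrum, so the class of `T` has empty spectrum iff the spectrum
of the class of `S₀` is contained in `{0}`.
-/

variable {X : Type*} [NormedAddCommGroup X] [NormedSpace ℂ X] [CompleteSpace X]

/-- `T` is a Fredholm operator: its kernel is finite dimensional and its range is closed with
finite codimension. -/
def IsFredholmOp (T : X →L[ℂ] X) : Prop :=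
  FiniteDimensional ℂ (LinearMap.ker (T : X →ₗ[ℂ] X)) ∧
  IsClosed (LinearMap.range (T : X →ₗ[ℂ] X) : Set X) ∧
  FiniteDimensional ℂ (X ⧸ LinearMap.range (T : X →ₗ[ℂ] X))

open scoped LinearMap.FiniteRangeSetoid

theorem Units.eq_inv_of_mul_mul_self {M : Type*} [Monoid M] (u : Mˣ) {a : M}
    (h : ↑u * a * ↑u = ↑u) : a = ↑u⁻¹ := by
  simpa [mul_assoc] using congr(↑u⁻¹ * $h * ↑u⁻¹)

theorem spectrum.eq_empty_iff_inv_subset_zero {𝕜 A : Type*} [Semifield 𝕜] [Ring A]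
    [Algebra 𝕜 A] (a : Aˣ) : spectrum 𝕜 (a : A) = ∅ ↔ spectrum 𝕜 (↑a⁻¹ : A) ⊆ {0} := by
  rw [Set.eq_empty_iff_forall_notMem]
  refine ⟨fun h l hl => absurd (spectrum.inv₀_mem hl) (h l⁻¹), fun h l hl => ?_⟩
  have hl0 : l = 0 := inv_eq_zero.mp (h (spectrum.inv₀_mem_inv hl))
  exact spectrum.zero_notMem 𝕜 a.isUnit (hl0 ▸ hl)

namespace ContinuousLinearMap

section FiniteRangeIdeal

variable (K E : Type*) [CommRing K] [AddCommGroup E] [Module K E] [TopologicalSpace E]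
  [IsTopologicalAddGroup E]

def finiteRangeIdeal : Ideal (E →L[K] E) where
  carrier := {u | (u : E →ₗ[K] E).HasNoetherianRange}
  add_mem' hu hv := hu.add hv
  zero_mem' := LinearMap.HasNoetherianRange.zero
  smul_mem' v _ hu := hu.comp_left (v : E →ₗ[K] E)

variable {K E}

lemma mem_finiteRangeIdeal {u : E →L[K] E} :
    u ∈ finiteRangeIdeal K E ↔ (u : E →ₗ[K] E).HasNoetherianRange :=
  Iff.rfl

instance : (finiteRangeIdeal K E).IsTwoSided :=
  ⟨fun v hu => LinearMap.HasNoetherianRange.comp_right hu (v : E →ₗ[K] E)⟩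

lemma mk_finiteRangeIdeal_mul_eq_one_iff {u v : E →L[K] E} :
    Ideal.Quotient.mk (finiteRangeIdeal K E) (u * v) = 1 ↔ (u : E →ₗ[K] E) ∘ₗ v ≈ .id := by
  rw [← map_one (Ideal.Quotient.mk _), Ideal.Quotient.eq, mem_finiteRangeIdeal,
    LinearMap.FiniteRangeSetoid.equiv_iff_hasNoetherianRange]
  rfl

lemma isUnit_mk_finiteRangeIdeal_iff {u : E →L[K] E} :
    IsUnit (Ideal.Quotient.mk (finiteRangeIdeal K E) u) ↔
      ∃ v : E →L[K] E, v.IsQuasiInverse u := by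
  simp only [isUnit_iff_exists, Ideal.Quotient.mk_surjective.exists, ← map_mul,
    mk_finiteRangeIdeal_mul_eq_one_iff]
  exact exists_congr fun _ => and_comm

end FiniteRangeIdeal

theorem isStrictMap_of_isClosed_range {𝕜 E F : Type*} [NontriviallyNormedField 𝕜]
    [NormedAddCommGroup E] [NormedSpace 𝕜 E] [CompleteSpace E]
    [NormedAddCommGroup F] [NormedSpace 𝕜 F] [CompleteSpace F] {u : E →L[𝕜] F}
    (hu : IsClosed (u.range : Set F)) : Topology.IsStrictMap u := by
  have : CompleteSpace u.range := hu.completeSpace_coe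
  have hsurj : Function.Surjective u.rangeRestrict := LinearMap.surjective_rangeRestrict _
  exact (LinearMap.isStrictMap_iff_isOpenQuotientMap_rangeRestrict (f := (u : E →ₗ[𝕜] F))).2
    ⟨hsurj, u.rangeRestrict.continuous, u.rangeRestrict.isOpenMap hsurj⟩

end ContinuousLinearMap

open ContinuousLinearMap

theorem isFredholmOp_iff_isFredholm {T : X →L[ℂ] X} : IsFredholmOp T ↔ T.IsFredholm :=
  ⟨fun ⟨hker, hrange, hcoker⟩ => ⟨isStrictMap_of_isClosed_range hrange, hrange, hker, hcoker,
      Submodule.ClosedComplemented.of_finiteDimensional _⟩,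
    fun h => ⟨h.finite_ker, h.isClosed_range, h.finite_coker⟩⟩

theorem isFredholmOp_iff_isUnit_mk {T : X →L[ℂ] X} :
    IsFredholmOp T ↔ IsUnit (Ideal.Quotient.mk (finiteRangeIdeal ℂ X) T) := by
  rw [isFredholmOp_iff_isFredholm, isFredholm_iff_exists_isQuasiInverse,
    isUnit_mk_finiteRangeIdeal_iff]

theorem isFredholmOp_sub_smul_one_iff (T : X →L[ℂ] X) (l : ℂ) :
    IsFredholmOp (T - l • 1) ↔ l ∉ spectrum ℂ (Ideal.Quotient.mk (finiteRangeIdeal ℂ X) T) := by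
  rw [isFredholmOp_iff_isUnit_mk, spectrum.notMem_iff, ← Ideal.Quotient.mkₐ_eq_mk ℂ, map_sub,
    map_smul, map_one, ← Algebra.algebraMap_eq_smul_one, ← IsUnit.neg_iff, neg_sub]

theorem stmt13_general (T S₀ : X →L[ℂ] X) (hFred : IsFredholmOp T)
    (hTST : T * S₀ * T = T) :
    (∀ l : ℂ, IsFredholmOp (T - l • 1)) ↔
    (∀ l : ℂ, l ≠ 0 → IsFredholmOp (S₀ - l • 1)) := by
  obtain ⟨t, ht⟩ := isFredholmOp_iff_isUnit_mk.mp hFred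
  have hS₀ : Ideal.Quotient.mk (finiteRangeIdeal ℂ X) S₀ = ↑t⁻¹ :=
    t.eq_inv_of_mul_mul_self (by rw [ht, ← map_mul, ← map_mul, hTST])
  simp_rw [isFredholmOp_sub_smul_one_iff, ← ht, hS₀]
  simpa [Set.eq_empty_iff_forall_notMem, Set.subset_def, not_imp_not] using
    spectrum.eq_empty_iff_inv_subset_zero (𝕜 := ℂ) t

/-- Let `T ∈ B(X)` be Fredholm and let `S₀ ∈ B(X)` be a generalized inverse of
`T`.  Then `T - λI` is Fredholm for every `λ ∈ ℂ` if and only if `S₀ - λI` is Fredholm for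
every `λ ≠ 0` (i.e. the essential spectrum of `S₀` is contained in `{0}`). -/
theorem stmt13 (T S₀ : X →L[ℂ] X) (hFred : IsFredholmOp T)
    (hTST : T * S₀ * T = T) (hSTS : S₀ * T * S₀ = S₀) :
    (∀ l : ℂ, IsFredholmOp (T - l • 1)) ↔
    (∀ l : ℂ, l ≠ 0 → IsFredholmOp (S₀ - l • 1)) :=
  stmt13_general T S₀ hFred hTST
end

section
/- Let T ∈ B(X) with 0 ∈ ρ_e^r(T), and suppose there exists a generalized inverse S₀ ∈ B(X) of T whose spectrum satisfies σ(S₀) ⊆ {0} (i.e. S₀ is quasinilpotent). Then ρ_e^r(T) = ℂ, that is, for every λ ∈ ℂ the operator T − λI is Fredholm and λ ∈ reg(T). -/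
variable {X : Type*} [NormedAddCommGroup X] [NormedSpace ℂ X] [CompleteSpace X]

/-- `reg T` is the set of `λ ∈ ℂ` possessing an open neighbourhood `V` on which there is an
analytic function `R : V → B(X)` such that `R μ` is a generalized inverse of `T - μI` for
every `μ ∈ V`. -/
def regSet (T : X →L[ℂ] X) : Set ℂ :=
  {l : ℂ | ∃ V : Set ℂ, IsOpen V ∧ l ∈ V ∧
    ∃ R : ℂ → X →L[ℂ] X, AnalyticOnNhd ℂ R V ∧
      ∀ μ ∈ V, (T - μ • 1) * R μ * (T - μ • 1) = T - μ • 1 ∧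
               R μ * (T - μ • 1) * R μ = R μ}

/-!
Since `S₀` is quasinilpotent, `U z = (1 - z • S₀)⁻¹` is entire, and `R z = U z * S₀` satisfies
`(T - z) * R z = 1 - (1 - T S₀) U z` and `R z * (T - z) = 1 - U z (1 - S₀ T)`. Hence `R z` is a
generalized inverse of `T - z` as soon as `N z = (1 - T S₀) U z (1 - S₀ T)` vanishes, and then
`T - z` is Fredholm because `1 - T S₀` and `1 - S₀ T` have finite rank.

For `z ≠ 0` the kernel of `T - z` lies in `U z (ker T ⊓ ker ((1 - T S₀) U z))`, while the analytic
generalized inverse near `0` makes `dim ker (T - z) ≥ dim ker T` for `z` near `0`. As `ker T` is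
finite dimensional, `N z = 0` for small `z ≠ 0`, hence for all `z` by the identity theorem.
-/

theorem IsIdempotentElem.one_add_sub_mul_two_mul_sub_one_mul {A : Type*} [Ring A] {p q : A}
    (hp : IsIdempotentElem p) : (1 + (q - p) * (2 * p - 1)) * p = q * p := by
  have h : (2 * p - 1) * p = p := by
    rw [sub_mul, mul_assoc, hp.eq, one_mul, two_mul, add_sub_cancel_right]
  rw [add_mul, one_mul, mul_assoc, h, sub_mul, hp.eq, add_sub_cancel]

def IsGenInverse {A : Type*} [Mul A] (b r : A) : Prop :=
  b * r * b = b ∧ r * b * r = r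

section OneSubSmulInverse

variable {𝕜 A : Type*} [CommSemiring 𝕜] [Ring A] [Algebra 𝕜 A] {t s u : A} {z : 𝕜}

-- `u` stands for `(1 - z • s)⁻¹`, called `inv` in the lemma names.

theorem mul_one_sub_mul_eq_zero {a b : A} (h : a * b * a = a) : a * (1 - b * a) = 0 := by
  rw [mul_sub, mul_one, ← mul_assoc, h, sub_self]

theorem commute_of_inv_one_sub_smul (hul : u * (1 - z • s) = 1) (hur : (1 - z • s) * u = 1) :
    Commute s u := by
  have hs : Commute s (1 - z • s) :=
    (Commute.one_right s).sub_right ((Commute.refl s).smul_right z)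
  calc s * u = u * (1 - z • s) * s * u := by rw [hul, one_mul]
    _ = u * s * ((1 - z • s) * u) := by rw [mul_assoc u, ← hs.eq]; simp only [mul_assoc]
    _ = u * s := by rw [hur, mul_one]

theorem smul_inv_mul_eq_sub_one (hul : u * (1 - z • s) = 1) : z • (u * s) = u - 1 := by
  rw [mul_sub, mul_one, mul_smul_comm] at hul
  rw [← hul, sub_sub_cancel]

theorem smul_mul_inv_eq_sub_one (hur : (1 - z • s) * u = 1) : z • (s * u) = u - 1 := by
  rw [sub_mul, one_mul, smul_mul_assoc] at hur
  rw [← hur, sub_sub_cancel]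

theorem sub_smul_one_mul_inv_mul (hul : u * (1 - z • s) = 1) (hur : (1 - z • s) * u = 1) :
    (t - z • 1) * (u * s) = 1 - (1 - t * s) * u := by
  rw [sub_mul, smul_mul_assoc, one_mul, smul_inv_mul_eq_sub_one hul,
    ← (commute_of_inv_one_sub_smul hul hur).eq, ← mul_assoc]
  noncomm_ring

theorem inv_mul_mul_sub_smul_one (hul : u * (1 - z • s) = 1) :
    u * s * (t - z • 1) = 1 - u * (1 - s * t) := by
  rw [mul_sub, mul_smul_comm, mul_one, smul_inv_mul_eq_sub_one hul, mul_assoc]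
  noncomm_ring

theorem sub_smul_one_mul_inv (hur : (1 - z • s) * u = 1) :
    (t - z • 1) * u = t - z • ((1 - t * s) * u) := by
  rw [sub_mul, smul_mul_assoc, one_mul, sub_mul, one_mul, mul_assoc, smul_sub, ← mul_smul_comm,
    smul_mul_inv_eq_sub_one hur]
  noncomm_ring

theorem isGenInverse_inv_mul (hts : t * s * t = t) (hst : s * t * s = s)
    (hul : u * (1 - z • s) = 1) (hur : (1 - z • s) * u = 1)
    (h : (1 - t * s) * u * (1 - s * t) = 0) : IsGenInverse (t - z • 1) (u * s) := by
  constructor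
  · calc (t - z • 1) * (u * s) * (t - z • 1) = (t - z • 1) * (1 - u * (1 - s * t)) := by
          rw [mul_assoc, inv_mul_mul_sub_smul_one hul]
      _ = (t - z • 1) - (t * (1 - s * t) - z • ((1 - t * s) * u * (1 - s * t))) := by
          rw [mul_sub, mul_one, ← mul_assoc, sub_smul_one_mul_inv hur, sub_mul, smul_mul_assoc]
      _ = t - z • 1 := by rw [mul_one_sub_mul_eq_zero hts, h, smul_zero, sub_zero, sub_zero]
  · calc u * s * (t - z • 1) * (u * s) = u * s * (1 - (1 - t * s) * u) := by
          rw [mul_assoc, sub_smul_one_mul_inv_mul hul hur]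
      _ = u * s := by
          rw [mul_sub, mul_one, mul_assoc, ← mul_assoc s, mul_one_sub_mul_eq_zero hst, zero_mul,
            mul_zero, sub_zero]

end OneSubSmulInverse

namespace ContinuousLinearMap

variable {𝕜 E : Type*} [NontriviallyNormedField 𝕜] [NormedAddCommGroup E] [NormedSpace 𝕜 E]
  {b r : E →L[𝕜] E}

theorem range_eq_ker_one_sub_mul (h : b * r * b = b) :
    LinearMap.range (b : E →ₗ[𝕜] E) = LinearMap.ker ((1 - b * r : E →L[𝕜] E) : E →ₗ[𝕜] E) := by
  ext y
  constructor
  · rintro ⟨x, rfl⟩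
    simpa [sub_eq_zero] using congr($h x).symm
  · intro (hy : y - b (r y) = 0)
    exact ⟨r y, (sub_eq_zero.mp hy).symm⟩

theorem ker_eq_range_one_sub_mul (h : b * r * b = b) :
    LinearMap.ker (b : E →ₗ[𝕜] E) = LinearMap.range ((1 - r * b : E →L[𝕜] E) : E →ₗ[𝕜] E) := by
  ext x
  constructor
  · intro hx
    exact ⟨x, by simp [show b x = 0 from hx]⟩
  · rintro ⟨y, rfl⟩
    simpa [sub_eq_zero] using congr($h y).symm

end ContinuousLinearMap

theorem isFredholmOp_iff_of_mul_mul_eq {E : Type*} [NormedAddCommGroup E] [NormedSpace ℂ E]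
    {b r : E →L[ℂ] E} (h : b * r * b = b) :
    IsFredholmOp b ↔
      FiniteDimensional ℂ (LinearMap.range ((1 - r * b : E →L[ℂ] E) : E →ₗ[ℂ] E)) ∧
      FiniteDimensional ℂ (LinearMap.range ((1 - b * r : E →L[ℂ] E) : E →ₗ[ℂ] E)) := by
  have hcoker := ((1 - b * r : E →L[ℂ] E) : E →ₗ[ℂ] E).quotKerEquivRange
  rw [IsFredholmOp, ContinuousLinearMap.ker_eq_range_one_sub_mul h,
    ContinuousLinearMap.range_eq_ker_one_sub_mul h]
  exact ⟨fun ⟨hk, _, _⟩ ↦ ⟨hk, hcoker.finiteDimensional⟩,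
    fun ⟨hk, _⟩ ↦ ⟨hk, ContinuousLinearMap.isClosed_ker _, hcoker.symm.finiteDimensional⟩⟩

section KernelRank

open Filter Topology

variable {𝕜 E : Type*} [NontriviallyNormedField 𝕜] [NormedAddCommGroup E] [NormedSpace 𝕜 E]
  [CompleteSpace E]

theorem rank_ker_le_of_norm_sub_mul_lt {a b r s : E →L[𝕜] E} (hr : r * a * r = r)
    (hb : b * s * b = b)
    (hnorm : ‖(1 - s * b) - (1 - r * a)‖ * ‖2 * (1 - r * a) - 1‖ < 1) :
    Module.rank 𝕜 (LinearMap.ker (a : E →ₗ[𝕜] E)) ≤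
      Module.rank 𝕜 (LinearMap.ker (b : E →ₗ[𝕜] E)) := by
  set p := 1 - r * a
  set q := 1 - s * b
  have hp : IsIdempotentElem p := by
    refine IsIdempotentElem.one_sub ?_
    rw [IsIdempotentElem, ← mul_assoc, hr]
  have hbq : b * q = 0 := by rw [mul_sub, mul_one, ← mul_assoc, hb, sub_self]
  -- `w` is a unit with `w * p = q * p`, so it embeds `ker a = range p` into `range q ≤ ker b`.
  let w := Units.oneSub (-((q - p) * (2 * p - 1)))
    ((norm_neg _).trans_lt ((norm_mul_le _ _).trans_lt hnorm))
  have hw : (w : E →L[𝕜] E) = 1 + (q - p) * (2 * p - 1) := sub_neg_eq_add _ _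
  have hmap : (LinearMap.ker (a : E →ₗ[𝕜] E)).map ((w : E →L[𝕜] E) : E →ₗ[𝕜] E) ≤
      LinearMap.ker (b : E →ₗ[𝕜] E) := by
    rintro _ ⟨x, hx : a x = 0, rfl⟩
    have hpx : p x = x := by simp [p, hx]
    have hwx : (w : E →L[𝕜] E) x = q x :=
      calc (w : E →L[𝕜] E) x = ((w : E →L[𝕜] E) * p) x := by rw [mul_apply_eq_comp, hpx]
        _ = (q * p) x := by rw [hw, hp.one_add_sub_mul_two_mul_sub_one_mul]
        _ = q x := by rw [mul_apply_eq_comp, hpx]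
    show b ((w : E →L[𝕜] E) x) = 0
    rw [hwx, ← mul_apply_eq_comp, hbq, zero_apply]
  calc Module.rank 𝕜 (LinearMap.ker (a : E →ₗ[𝕜] E))
      = Module.rank 𝕜 ((LinearMap.ker (a : E →ₗ[𝕜] E)).map ((w : E →L[𝕜] E) : E →ₗ[𝕜] E)) :=
        (rank_map_eq (ContinuousLinearEquiv.unitsEquiv 𝕜 E w).injective _).symm
    _ ≤ _ := Submodule.rank_mono hmap

theorem eventually_rank_ker_le {α : Type*} [TopologicalSpace α] {a R : α → E →L[𝕜] E} {x₀ : α}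
    (ha : ContinuousAt a x₀) (hR : ContinuousAt R x₀)
    (hgen : ∀ᶠ x in 𝓝 x₀, IsGenInverse (a x) (R x)) :
    ∀ᶠ x in 𝓝 x₀, Module.rank 𝕜 (LinearMap.ker (a x₀ : E →ₗ[𝕜] E)) ≤
      Module.rank 𝕜 (LinearMap.ker (a x : E →ₗ[𝕜] E)) := by
  set P := fun x ↦ 1 - R x * a x
  have hP : ContinuousAt P x₀ := continuousAt_const.sub (hR.mul ha)
  have hsmall : ∀ᶠ x in 𝓝 x₀, ‖P x - P x₀‖ * ‖2 * P x₀ - 1‖ < 1 := by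
    refine ((hP.sub continuousAt_const).norm.mul continuousAt_const).eventually_lt_const ?_
    simp [P]
  filter_upwards [hgen, hsmall] with x hx hxsmall
  exact rank_ker_le_of_norm_sub_mul_lt hgen.self_of_nhds.2 hx.1 hxsmall

end KernelRank

section OneSubSmulInverseKernel

variable {𝕜 E : Type*} [NontriviallyNormedField 𝕜] [NormedAddCommGroup E] [NormedSpace 𝕜 E]
  {t s u : E →L[𝕜] E} {z : 𝕜}

theorem ker_sub_smul_one_le_map (hts : t * s * t = t) (hul : u * (1 - z • s) = 1)
    (hur : (1 - z • s) * u = 1) (hz : z ≠ 0) :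
    LinearMap.ker ((t - z • 1 : E →L[𝕜] E) : E →ₗ[𝕜] E) ≤
      (LinearMap.ker (t : E →ₗ[𝕜] E) ⊓
        LinearMap.ker (((1 - t * s) * u : E →L[𝕜] E) : E →ₗ[𝕜] E)).map (u : E →ₗ[𝕜] E) := by
  intro x (hx : (t - z • 1) x = 0)
  set y := (1 - s * t) x
  have hxy : u y = x := by
    have h := congr($(inv_mul_mul_sub_smul_one (t := t) hul) x)
    simp only [mul_apply_eq_comp, hx, map_zero, sub_apply, one_apply_eq_self] at h
    exact (sub_eq_zero.mp h.symm).symm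
  have hty : t y = 0 := by
    rw [← mul_apply_eq_comp, mul_one_sub_mul_eq_zero hts, zero_apply]
  have hGy : ((1 - t * s) * u) y = 0 := by
    have h := congr($(sub_smul_one_mul_inv (t := t) hur) y)
    rw [mul_apply_eq_comp, hxy, hx, sub_apply, hty, zero_sub, eq_comm, neg_eq_zero,
      smul_apply, smul_eq_zero] at h
    exact h.resolve_left hz
  exact ⟨y, ⟨hty, hGy⟩, hxy⟩

theorem one_sub_mul_mul_inv_mul_eq_zero_of_rank_ker_le
    [FiniteDimensional 𝕜 (LinearMap.ker (t : E →ₗ[𝕜] E))] (hts : t * s * t = t)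
    (hul : u * (1 - z • s) = 1) (hur : (1 - z • s) * u = 1) (hz : z ≠ 0)
    (hrank : Module.rank 𝕜 (LinearMap.ker (t : E →ₗ[𝕜] E)) ≤
      Module.rank 𝕜 (LinearMap.ker ((t - z • 1 : E →L[𝕜] E) : E →ₗ[𝕜] E))) :
    (1 - t * s) * u * (1 - s * t) = 0 := by
  set K := LinearMap.ker (t : E →ₗ[𝕜] E) ⊓
    LinearMap.ker (((1 - t * s) * u : E →L[𝕜] E) : E →ₗ[𝕜] E)
  have hu : Function.Injective u :=
    Function.LeftInverse.injective (g := ⇑(1 - z • s : E →L[𝕜] E)) fun x ↦ by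
      rw [← mul_apply_eq_comp, hur, one_apply_eq_self]
  have hK : Module.rank 𝕜 (LinearMap.ker (t : E →ₗ[𝕜] E)) ≤ Module.rank 𝕜 K :=
    calc _ ≤ _ := hrank
      _ ≤ Module.rank 𝕜 (K.map (u : E →ₗ[𝕜] E)) :=
        Submodule.rank_mono (ker_sub_smul_one_le_map hts hul hur hz)
      _ = Module.rank 𝕜 K := rank_map_eq hu K
  have : FiniteDimensional 𝕜 K := Submodule.finiteDimensional_of_le inf_le_left
  rw [← Module.finrank_eq_rank, ← Module.finrank_eq_rank, Nat.cast_le] at hK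
  have hKt : LinearMap.ker (t : E →ₗ[𝕜] E) ≤
      LinearMap.ker (((1 - t * s) * u : E →L[𝕜] E) : E →ₗ[𝕜] E) :=
    (Submodule.eq_of_le_of_finrank_le inf_le_left hK).ge.trans inf_le_right
  ext x
  exact hKt (show t ((1 - s * t) x) = 0 by
    rw [← mul_apply_eq_comp, mul_one_sub_mul_eq_zero hts, zero_apply])

end OneSubSmulInverseKernel

theorem isUnit_one_sub_smul_of_spectrum_subset_zero {𝕜 A : Type*} [Field 𝕜] [Ring A]
    [Algebra 𝕜 A] {s : A} (hs : spectrum 𝕜 s ⊆ {0}) (z : 𝕜) : IsUnit (1 - z • s) := by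
  rcases eq_or_ne z 0 with rfl | hz
  · simp
  have hinv : z⁻¹ ∉ spectrum 𝕜 s := fun h ↦ inv_ne_zero hz (hs h)
  rw [spectrum.notMem_iff, Algebra.algebraMap_eq_smul_one] at hinv
  convert hinv.smul (Units.mk0 z hz)
  simp [smul_sub, smul_smul, hz]

theorem analyticOnNhd_inverse_one_sub_smul {𝕜 A : Type*} [NontriviallyNormedField 𝕜]
    [NormedRing A] [NormedAlgebra 𝕜 A] [HasSummableGeomSeries A] (s : A) :
    AnalyticOnNhd 𝕜 (fun z : 𝕜 ↦ Ring.inverse (1 - z • s)) {z | IsUnit (1 - z • s)} :=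
  analyticOnNhd_inverse.comp (fun _ _ ↦ by fun_prop) fun _ hz ↦ hz

theorem one_sub_mul_mul_inverse_one_sub_smul_mul_eq_zero {T S : X →L[ℂ] X}
    [FiniteDimensional ℂ (LinearMap.ker (T : X →ₗ[ℂ] X))] (hTST : T * S * T = T)
    (hreg : (0 : ℂ) ∈ regSet T) (hunit : ∀ z : ℂ, IsUnit (1 - z • S)) (z : ℂ) :
    (1 - T * S) * Ring.inverse (1 - z • S) * (1 - S * T) = 0 := by
  obtain ⟨V, hV, h0V, R, hR, hRgen⟩ := hreg
  have hrank := eventually_rank_ker_le (a := fun μ : ℂ ↦ T - μ • 1) (by fun_prop)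
    (hR 0 h0V).continuousAt (Filter.eventually_of_mem (hV.mem_nhds h0V) hRgen)
  beta_reduce at hrank
  rw [zero_smul, sub_zero] at hrank
  have hN : AnalyticOnNhd ℂ (fun z : ℂ ↦ (1 - T * S) * Ring.inverse (1 - z • S) * (1 - S * T))
      Set.univ :=
    (analyticOnNhd_const.mul ((analyticOnNhd_inverse_one_sub_smul S).mono fun z _ ↦ hunit z)).mul
      analyticOnNhd_const
  refine hN.eqOn_zero_of_preconnected_of_frequently_eq_zero isPreconnected_univ (Set.mem_univ 0)
    (Filter.Eventually.frequently ?_) (Set.mem_univ z)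
  filter_upwards [nhdsWithin_le_nhds hrank, self_mem_nhdsWithin] with μ hμ (hμ0 : μ ≠ 0)
  exact one_sub_mul_mul_inv_mul_eq_zero_of_rank_ker_le hTST (Ring.inverse_mul_cancel _ (hunit μ))
    (Ring.mul_inverse_cancel _ (hunit μ)) hμ0 hμ

/-- Let `T ∈ B(X)` with `0 ∈ ρₑʳ(T)` (`T` is Fredholm and `0 ∈ reg T`), and
suppose there exists a generalized inverse `S₀ ∈ B(X)` of `T` with `σ(S₀) ⊆ {0}` (`S₀` is
quasinilpotent).  Then `ρₑʳ(T) = ℂ`: for every `λ ∈ ℂ` the operator `T - λI` is Fredholm and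
`λ ∈ reg T`. -/
theorem stmt14 (T : X →L[ℂ] X)
    (hFred : IsFredholmOp T) (hreg : (0 : ℂ) ∈ regSet T)
    (S₀ : X →L[ℂ] X) (hTST : T * S₀ * T = T) (hSTS : S₀ * T * S₀ = S₀)
    (hq : spectrum ℂ S₀ ⊆ {0}) :
    ∀ l : ℂ, IsFredholmOp (T - l • 1) ∧ l ∈ regSet T := by
  have hunit := isUnit_one_sub_smul_of_spectrum_subset_zero hq
  set U := fun z : ℂ ↦ Ring.inverse (1 - z • S₀)
  have hUl (z : ℂ) : U z * (1 - z • S₀) = 1 := Ring.inverse_mul_cancel _ (hunit z)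
  have hUr (z : ℂ) : (1 - z • S₀) * U z = 1 := Ring.mul_inverse_cancel _ (hunit z)
  have : FiniteDimensional ℂ (LinearMap.ker (T : X →ₗ[ℂ] X)) := hFred.1
  have hgen (z : ℂ) : IsGenInverse (T - z • 1) (U z * S₀) :=
    isGenInverse_inv_mul hTST hSTS (hUl z) (hUr z)
      (one_sub_mul_mul_inverse_one_sub_smul_mul_eq_zero hTST hreg hunit z)
  obtain ⟨hF, hG⟩ := (isFredholmOp_iff_of_mul_mul_eq hTST).1 hFred
  refine fun l ↦ ⟨(isFredholmOp_iff_of_mul_mul_eq (hgen l).1).2 ⟨?_, ?_⟩,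
    Set.univ, isOpen_univ, Set.mem_univ l, fun z ↦ U z * S₀,
    ((analyticOnNhd_inverse_one_sub_smul S₀).mono fun z _ ↦ hunit z).mul analyticOnNhd_const,
    fun z _ ↦ hgen z⟩
  · rw [inv_mul_mul_sub_smul_one (hUl l), sub_sub_cancel, ContinuousLinearMap.toLinearMap_mul,
      Module.End.mul_eq_comp, LinearMap.range_comp]
    infer_instance
  · rw [sub_smul_one_mul_inv_mul (hUl l) (hUr l), sub_sub_cancel,
      ContinuousLinearMap.toLinearMap_mul, Module.End.mul_eq_comp]
    exact Submodule.finiteDimensional_of_le (LinearMap.range_comp_le_range _ _)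
end

section
/- Let V be a finite-dimensional complex vector space and let N : V → V be a nilpotent linear map. Then there exists a nilpotent linear map S : V → V such that N∘S∘N = N and S∘N∘S = S. -/
/-!
Induct on the nilpotency index. On `W = range N` the restriction `M` of `N` has smaller index, so
it has a nilpotent generalized inverse `T`. Lift `T` to `f : W → V` with `N ∘ f = id`, by correcting
`T` on the complement `range (1 - M T)` of `range M` with a right inverse of `N` whose image meets
`W` only in `0`; then pick a retraction `π : V → W` with `π ∘ f = T`. Any `f ∘ π` built from a right
inverse of `N` and a retraction onto `W` is a generalized inverse of `N`, and this one is nilpotent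
because `π ∘ f = T` is.
-/

open LinearMap Submodule

namespace LinearMap

variable {R U U' : Type*} [Semiring R] [AddCommMonoid U] [Module R U] [AddCommMonoid U']
  [Module R U']

theorem pow_succ_comp_apply (f : U' →ₗ[R] U) (g : U →ₗ[R] U') (n : ℕ) (x : U) :
    ((f ∘ₗ g) ^ (n + 1)) x = f (((g ∘ₗ f) ^ n) (g x)) := by
  induction n generalizing x with
  | zero => rfl
  | succ n ih => rw [pow_succ, Module.End.mul_apply, ih, pow_succ, Module.End.mul_apply]; rfl

theorem isNilpotent_comp_of_isNilpotent_comp {f : U' →ₗ[R] U} {g : U →ₗ[R] U'}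
    (h : IsNilpotent (g ∘ₗ f)) : IsNilpotent (f ∘ₗ g) := by
  obtain ⟨n, hn⟩ := h
  exact ⟨n + 1, LinearMap.ext fun x => by simp [pow_succ_comp_apply, hn]⟩

end LinearMap

namespace Module.End

variable {R U : Type*} [Semiring R] [AddCommMonoid U] [Module R U]

def restrictToRange (N : Module.End R U) : Module.End R (range N) :=
  N.restrict fun x _ => mem_range_self N x

@[simp]
theorem coe_restrictToRange_apply (N : Module.End R U) (w : range N) :
    (N.restrictToRange w : U) = N w :=
  rfl

theorem restrictToRange_pow_eq_zero {N : Module.End R U} {k : ℕ} (hN : N ^ (k + 1) = 0) :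
    N.restrictToRange ^ k = 0 := by
  ext ⟨_, v, rfl⟩
  rw [restrictToRange, pow_restrict, coe_restrict_apply, ← mul_apply, ← pow_succ, hN]
  rfl

variable {N : Module.End R U} {W : Submodule R U} {f : W →ₗ[R] U} {π : U →ₗ[R] W}

theorem mul_comp_mul_eq_self (hNW : range N ≤ W) (hf : ∀ w, N (f w) = w) (hπ : ∀ w : W, π w = w) :
    N * (f ∘ₗ π) * N = N := by
  ext v
  have : π (N v) = ⟨N v, hNW (mem_range_self N v)⟩ := hπ ⟨N v, _⟩
  simp [this, hf]

theorem comp_mul_comp_eq_self (hf : ∀ w, N (f w) = w) (hπ : ∀ w : W, π w = w) :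
    (f ∘ₗ π) * N * (f ∘ₗ π) = f ∘ₗ π := by
  ext v
  simp [hf, hπ]

end Module.End

section DivisionRing

variable {K V : Type*} [DivisionRing K] [AddCommGroup V] [Module K V]

theorem Submodule.exists_retraction_of_disjoint {W E : Submodule K V} (h : Disjoint W E) :
    ∃ π : V →ₗ[K] W, (∀ w : W, π w = w) ∧ E ≤ ker π := by
  obtain ⟨C, hEC, hWC⟩ := h.symm.exists_isCompl
  exact ⟨W.projectionOnto C hWC.symm, W.projectionOnto_apply_left hWC.symm,
    fun _ hx => W.projectionOnto_apply_of_mem_right hWC.symm (hEC hx)⟩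

namespace Module.End

theorem exists_rightInverse_retraction_comp_eq (N : Module.End K V) (T : Module.End K (range N))
    (hT : N.restrictToRange * T * N.restrictToRange = N.restrictToRange) :
    ∃ (f : range N →ₗ[K] V) (π : V →ₗ[K] range N),
      (∀ w, N (f w) = w) ∧ (∀ w : range N, π w = w) ∧ π ∘ₗ f = T := by
  set M := N.restrictToRange
  obtain ⟨P, hP⟩ := N.rangeRestrict.exists_rightInverse_of_surjective N.range_rangeRestrict
  have hNP (w : range N) : N (P w) = w := congrArg Subtype.val (LinearMap.congr_fun hP w)
  let Q := P ∘ₗ (1 - M * T)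
  have hQ : Disjoint (range N) (range Q) := by
    rw [disjoint_def]
    rintro _ ⟨v, rfl⟩ ⟨w, hw⟩
    have hw_mem : (1 - M * T) w = M ⟨N v, mem_range_self N v⟩ :=
      Subtype.ext ((hNP _).symm.trans (congrArg N hw))
    -- `M * T` is an idempotent with image `range M`, so `1 - M * T` meets `range M` only in `0`.
    have hMT : M * T * (1 - M * T) = 0 := by rw [mul_sub, mul_one, ← mul_assoc, hT, sub_self]
    have hw_zero : (1 - M * T) w = 0 := by
      rw [hw_mem, ← hT, mul_apply, ← hw_mem, ← mul_apply, hMT, LinearMap.zero_apply]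
    rw [← hw, comp_apply, hw_zero, map_zero]
  obtain ⟨π, hπ, hQπ⟩ := exists_retraction_of_disjoint hQ
  refine ⟨(range N).subtype ∘ₗ T + Q, π, fun w => ?_, hπ, ?_⟩
  · rw [LinearMap.add_apply, map_add, comp_apply, subtype_apply, ← coe_restrictToRange_apply,
      comp_apply, hNP, ← Submodule.coe_add, LinearMap.sub_apply, one_apply, mul_apply,
      add_sub_cancel]
  · ext w
    rw [comp_apply, LinearMap.add_apply, map_add, comp_apply, subtype_apply, hπ,
      hQπ (mem_range_self Q w), add_zero]

theorem exists_isNilpotent_generalizedInverse {N : Module.End K V} (hN : IsNilpotent N) :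
    ∃ S : Module.End K V, IsNilpotent S ∧ N * S * N = N ∧ S * N * S = S := by
  obtain ⟨k, hk⟩ := hN
  induction k generalizing V with
  | zero =>
    have h0 (f : Module.End K V) : f = 0 := by rw [← mul_one f, ← pow_zero N, hk, mul_zero]
    exact ⟨0, IsNilpotent.zero, (h0 _).trans (h0 N).symm, (h0 _).trans (h0 0).symm⟩
  | succ k ih =>
    obtain ⟨T, hT, hMTM, -⟩ := ih (restrictToRange_pow_eq_zero hk)
    obtain ⟨f, π, hf, hπ, hπf⟩ := exists_rightInverse_retraction_comp_eq N T hMTM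
    exact ⟨f ∘ₗ π, isNilpotent_comp_of_isNilpotent_comp (hπf ▸ hT),
      mul_comp_mul_eq_self le_rfl hf hπ, comp_mul_comp_eq_self hf hπ⟩

end Module.End

end DivisionRing

theorem stmt15_general {V : Type*} [AddCommGroup V] [Module ℂ V]
    (N : V →ₗ[ℂ] V) (hN : IsNilpotent N) :
    ∃ S : V →ₗ[ℂ] V, IsNilpotent S ∧ N * S * N = N ∧ S * N * S = S :=
  Module.End.exists_isNilpotent_generalizedInverse hN

/-- Let `V` be a finite dimensional complex vector space and let `N : V → V` be
a nilpotent linear map.  Then there exists a nilpotent linear map `S : V → V` such that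
`N∘S∘N = N` and `S∘N∘S = S`. -/
theorem stmt15 {V : Type*} [AddCommGroup V] [Module ℂ V] [FiniteDimensional ℂ V]
    (N : V →ₗ[ℂ] V) (hN : IsNilpotent N) :
    ∃ S : V →ₗ[ℂ] V, IsNilpotent S ∧ N * S * N = N ∧ S * N * S = S :=
  stmt15_general N hN
end
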